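/- Vanishing time and cut-off operator: Let Ω ⊂ ℝ^d be the closure of a bounded domain. Define τ : 𝒮_Ω → [0,∞] by τ(γ,h) := min{t ∈ [0,1] : h(t) = 0} if this set is nonempty and τ(γ,h) := ∞ otherwise, and G : 𝒮_Ω → 𝒮_Ω by G(γ,h) := (γ, h·χ_{[0,τ(γ,h))}). Then τ is lower semicontinuous on (𝒮_Ω, D), G is Borel measurable, G(𝒮_Ω) ⊂ 𝒮*_Ω, G(H_Ω^{v,g}) ⊂ H_Ω^{v,g} for any measurable v : X_Ω → ℝ^d and g : X_Ω → ℝ, and the set 𝒮*_Ω is Borel measurable in (𝒮_Ω, D). -/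
import Mathlib


open MeasureTheory Set Filter Topology
open scoped ENNReal NNReal

noncomputable section

namespace Paper

abbrev Euc (d : ℕ) : Type := EuclideanSpace ℝ (Fin d)

abbrev XX (d : ℕ) : Type := ℝ × Euc d

variable {d : ℕ}

/-- `Ω` is the closure of a bounded domain (a nonempty bounded open connected set). -/
def IsClosureOfBoundedDomain (Ω : Set (Euc d)) : Prop :=
  ∃ U : Set (Euc d), IsOpen U ∧ U.Nonempty ∧ IsConnected U ∧
    Bornology.IsBounded U ∧ Ω = closure U

/-- `Ω` is the closure of a bounded convex domain. -/
def IsClosureOfBoundedConvexDomain (Ω : Set (Euc d)) : Prop :=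
  ∃ U : Set (Euc d), IsOpen U ∧ U.Nonempty ∧ Convex ℝ U ∧
    Bornology.IsBounded U ∧ Ω = closure U

/-- clamping of `ℝ` onto `[0,1]`. -/
def clamp (t : ℝ) : ℝ := max 0 (min 1 t)

/-- `t ↦ ρ t` is a narrowly continuous curve (on `[0,1]`) of finite positive
measures concentrated on `Ω`, i.e. an element of `C_w([0,1]; M⁺(Ω))`. -/
def NarrowCurve (Ω : Set (Euc d)) (ρ : ℝ → Measure (Euc d)) : Prop :=
  (∀ t ∈ Icc (0:ℝ) 1, ρ t Ωᶜ = 0 ∧ ρ t Set.univ ≠ ⊤) ∧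
  (∀ φ : Euc d → ℝ, Continuous φ →
      ContinuousOn (fun t => ∫ x, φ x ∂(ρ t)) (Icc (0:ℝ) 1))

/-- Test functions for the continuity equation on `X_Ω = (0,1) × Ω` (no-flux form:
compact support in time, free at the spatial boundary). -/
def IsTest (φ : XX d → ℝ) : Prop :=
  ContDiff ℝ (⊤ : ℕ∞) φ ∧ HasCompactSupport φ ∧
    tsupport φ ⊆ Ioo (0:ℝ) 1 ×ˢ (Set.univ : Set (Euc d))

/-- Distributional solution of `∂ₜ ρ + div (v ρ) = g ρ`. -/
def SolvesCE (ρ : ℝ → Measure (Euc d)) (v : XX d → Euc d) (g : XX d → ℝ) : Prop :=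
  ∀ φ : XX d → ℝ, IsTest φ →
    (∫ t in Ioo (0:ℝ) 1,
      ∫ x, (fderiv ℝ φ (t, x) (1, v (t, x)) + φ (t, x) * g (t, x)) ∂(ρ t)) = 0

/-- The Hellinger–Kantorovich energy `∫₀¹ ∫ (|v|² + g²) dρ_t dt`. -/
def EnergyVG (ρ : ℝ → Measure (Euc d)) (v : XX d → Euc d) (g : XX d → ℝ) : ℝ≥0∞ :=
  ∫⁻ t in Ioo (0:ℝ) 1, ∫⁻ x, ENNReal.ofReal (‖v (t, x)‖ ^ 2 + g (t, x) ^ 2) ∂(ρ t)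

/-- The class `D_{v,g}` of finite-energy narrowly continuous solutions. -/
def Dvg (Ω : Set (Euc d)) (v : XX d → Euc d) (g : XX d → ℝ)
    (ρ : ℝ → Measure (Euc d)) : Prop :=
  NarrowCurve Ω ρ ∧ SolvesCE ρ v g ∧ EnergyVG ρ v g < ⊤

/-- total variation `‖ρ‖_{M(X_Ω)}` of `ρ = dt ⊗ ρ_t`. -/
def TVcurve (ρ : ℝ → Measure (Euc d)) : ℝ≥0∞ :=
  ∫⁻ t in Ioo (0:ℝ) 1, ρ t Set.univ

/-- The cone `𝒞_V = {h δ_γ : h ≥ 0, γ ∈ V}` of weighted Dirac masses. -/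
def coneSet (V : Set (Euc d)) : Set (Measure (Euc d)) :=
  {μ | ∃ (a : ℝ) (x : Euc d), 0 ≤ a ∧ x ∈ V ∧ μ = ENNReal.ofReal a • Measure.dirac x}

/-- The space `𝒮_V` of narrowly continuous curves `[0,1] → 𝒞_V`
(extended to `ℝ` by clamping). -/
structure SCurve (V : Set (Euc d)) where
  toFun : ℝ → Measure (Euc d)
  clamped : ∀ t, toFun t = toFun (clamp t)
  cone : ∀ t, toFun t ∈ coneSet V
  narrow : ∀ φ : Euc d → ℝ, Continuous φ → Continuous fun t => ∫ x, φ x ∂(toFun t)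

/-- The flat distance `D_F` between measures. -/
def flatDist (μ ν : Measure (Euc d)) : ℝ :=
  sSup {r : ℝ | ∃ φ : Euc d → ℝ, Continuous φ ∧ (∀ x, |φ x| ≤ 1) ∧ LipschitzWith 1 φ ∧
        r = (∫ x, φ x ∂μ) - ∫ x, φ x ∂ν}

/-- The supremum distance `D` on `𝒮_V`. -/
def Ddist {V : Set (Euc d)} (η₁ η₂ : SCurve V) : ℝ :=
  sSup {r : ℝ | ∃ t ∈ Icc (0:ℝ) 1, r = flatDist (η₁.toFun t) (η₂.toFun t)}

/-- The topology of `(𝒮_V, D)`, generated by the open `D`-balls. -/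
def Stop (V : Set (Euc d)) : TopologicalSpace (SCurve V) :=
  TopologicalSpace.generateFrom
    {s | ∃ (η₀ : SCurve V) (ε : ℝ), 0 < ε ∧ s = {η | Ddist η₀ η < ε}}

/-- The Borel σ-algebra of `(𝒮_V, D)`. -/
def Sborel (V : Set (Euc d)) : MeasurableSpace (SCurve V) := @borel _ (Stop V)

instance (V : Set (Euc d)) : MeasurableSpace (SCurve V) := Sborel V

/-- `‖h‖_∞` for a curve `ρ_t = h(t) δ_{γ(t)} ∈ 𝒮_V`. -/
def supMass {V : Set (Euc d)} (η : SCurve V) : ℝ≥0∞ :=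
  ⨆ t ∈ Icc (0:ℝ) 1, η.toFun t Set.univ

/-- `AC²[0,1]`: absolutely continuous on `[0,1]` with a.e. derivative in `L²`. -/
def AC2 {F : Type*} [NormedAddCommGroup F] [NormedSpace ℝ F] (f : ℝ → F) : Prop :=
  ∃ f' : ℝ → F, IntegrableOn f' (Icc (0:ℝ) 1) ∧
    IntegrableOn (fun t => ‖f' t‖ ^ 2) (Icc (0:ℝ) 1) ∧
    ∀ t ∈ Icc (0:ℝ) 1, f t = f 0 + ∫ s in (0:ℝ)..t, f' s

/-- `(γ, h)` represents the curve `η ∈ 𝒮_V`, i.e. `η_t = h(t) δ_{γ(t)}` on `[0,1]`. -/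
def Represents {V : Set (Euc d)} (η : SCurve V) (γ : ℝ → Euc d) (h : ℝ → ℝ) : Prop :=
  ∀ t ∈ Icc (0:ℝ) 1, 0 ≤ h t ∧ γ t ∈ V ∧
    η.toFun t = ENNReal.ofReal (h t) • Measure.dirac (γ t)

/-- The set `H_V ⊆ 𝒮_V` of curves `h(t)δ_{γ(t)}` with `h, √h ∈ AC²[0,1]`,
`√h γ ∈ AC²([0,1];ℝ^d)`. -/
def MemH (V : Set (Euc d)) (η : SCurve V) : Prop :=
  ∃ (γ : ℝ → Euc d) (h : ℝ → ℝ), Represents η γ h ∧ AC2 h ∧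
    AC2 (fun t => Real.sqrt (h t)) ∧ AC2 (fun t => Real.sqrt (h t) • γ t)

/-- The set `H_V^{v,g}`: curves in `H_V` solving the characteristic system
`γ' = v(t,γ)` a.e. on `{h>0}` and `h' = g(t,γ) h` a.e. on `(0,1)`. -/
def MemHvg (V : Set (Euc d)) (v : XX d → Euc d) (g : XX d → ℝ) (η : SCurve V) : Prop :=
  ∃ (γ : ℝ → Euc d) (h : ℝ → ℝ), Represents η γ h ∧ AC2 h ∧
    AC2 (fun t => Real.sqrt (h t)) ∧ AC2 (fun t => Real.sqrt (h t) • γ t) ∧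
    (∀ᵐ t ∂(volume.restrict {t | t ∈ Ioo (0:ℝ) 1 ∧ 0 < h t}),
        HasDerivAt γ (v (t, γ t)) t) ∧
    (∀ᵐ t ∂(volume.restrict (Ioo (0:ℝ) 1)),
        HasDerivAt h (g (t, γ t) * h t) t)

/-- The set `𝒮*_V` of curves whose positivity set `{h > 0}` is `[0,1] ∩ (-∞, τ)`. -/
def MemSstar {V : Set (Euc d)} (η : SCurve V) : Prop :=
  ∃ τ : ℝ, {t | t ∈ Icc (0:ℝ) 1 ∧ η.toFun t Set.univ ≠ 0} = Icc (0:ℝ) 1 ∩ Iio τ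

/-- The vanishing time `τ(γ,h) = min { t ∈ [0,1] : h(t) = 0 }` (`∞` if none). -/
def tauS {V : Set (Euc d)} (η : SCurve V) : ℝ≥0∞ :=
  sInf {c : ℝ≥0∞ | ∃ t ∈ Icc (0:ℝ) 1, η.toFun t Set.univ = 0 ∧ c = ENNReal.ofReal t}


open Classical in
/-- The integrand `Ψ_δ(t,x,y)`. -/
def Psi (δ : ℝ) (t : ℝ) (x : Euc d) (y : ℝ) : ℝ≥0∞ :=
  if 0 < t then ENNReal.ofReal ((‖x‖ ^ 2 + δ ^ 2 * y ^ 2) / (2 * t))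
  else if t = 0 ∧ x = 0 ∧ y = 0 then 0 else ⊤

/-- `u` is a density of the signed measure `σ` with respect to `lam`. -/
def IsDensityS (σ : SignedMeasure (XX d)) (lam : Measure (XX d)) (u : XX d → ℝ) : Prop :=
  ∀ s : Set (XX d), MeasurableSet s → σ s = ∫ x in s, u x ∂lam

/-- `w` is a density of the vector measure `m` with respect to `lam`. -/
def IsDensityV (m : VectorMeasure (XX d) (Euc d)) (lam : Measure (XX d))
    (w : XX d → Euc d) : Prop :=
  ∀ s : Set (XX d), MeasurableSet s → m s = ∫ x in s, w x ∂lam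

/-- `r` is a density of the positive measure `P` with respect to `lam`. -/
def IsDensityP (P : Measure (XX d)) (lam : Measure (XX d)) (r : XX d → ℝ) : Prop :=
  ∀ s : Set (XX d), MeasurableSet s → P s = ∫⁻ x in s, ENNReal.ofReal (r x) ∂lam

/-- `(P, m, μ)` is a measure solution of `∂ₜ ρ + div m = μ` (with `P` positive). -/
def SolvesCEMeas (P : Measure (XX d)) (m : VectorMeasure (XX d) (Euc d))
    (μ : SignedMeasure (XX d)) : Prop :=
  ∀ (lam : Measure (XX d)), IsFiniteMeasure lam →
    ∀ (w : XX d → Euc d) (u : XX d → ℝ), Measurable w → Measurable u →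
      IsDensityV m lam w → IsDensityS μ lam u →
      ∀ φ : XX d → ℝ, IsTest φ →
        ((∫ x, fderiv ℝ φ x ((1:ℝ), (0 : Euc d)) ∂P) +
          (∫ x, fderiv ℝ φ x ((0:ℝ), w x) ∂lam) + ∫ x, φ x * u x ∂lam) = 0

/-- The Wasserstein–Fisher–Rao energy `B_δ(ρ,m,μ)` for a positive `ρ`. -/
def BdeltaMeas (δ : ℝ) (P : Measure (XX d)) (m : VectorMeasure (XX d) (Euc d))
    (μ : SignedMeasure (XX d)) : ℝ≥0∞ :=
  sInf {c : ℝ≥0∞ | ∃ lam : Measure (XX d), IsFiniteMeasure lam ∧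
    ∃ (r : XX d → ℝ) (w : XX d → Euc d) (u : XX d → ℝ),
      Measurable r ∧ Measurable w ∧ Measurable u ∧ (∀ x, 0 ≤ r x) ∧
      IsDensityP P lam r ∧ IsDensityV m lam w ∧ IsDensityS μ lam u ∧
      c = ∫⁻ x, Psi δ (r x) (w x) (u x) ∂lam}

open Classical in
/-- The coercive energy `J_{α,β,δ}(ρ,m,μ)` for a positive `ρ`. -/
def JMeas (α β δ : ℝ) (P : Measure (XX d)) (m : VectorMeasure (XX d) (Euc d))
    (μ : SignedMeasure (XX d)) : ℝ≥0∞ :=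
  if SolvesCEMeas P m μ then
    ENNReal.ofReal β * BdeltaMeas δ P m μ + ENNReal.ofReal α * P Set.univ
  else ⊤

/-- `(ρ, m, μ)` is a measure solution of `∂ₜ ρ + div m = μ` (signed case). -/
def SolvesCESigned (ρ : SignedMeasure (XX d)) (m : VectorMeasure (XX d) (Euc d))
    (μ : SignedMeasure (XX d)) : Prop :=
  ∀ (lam : Measure (XX d)), IsFiniteMeasure lam →
    ∀ (r : XX d → ℝ) (w : XX d → Euc d) (u : XX d → ℝ),
      Measurable r → Measurable w → Measurable u →
      IsDensityS ρ lam r → IsDensityV m lam w → IsDensityS μ lam u →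
      ∀ φ : XX d → ℝ, IsTest φ →
        (∫ x, (fderiv ℝ φ x ((1:ℝ), (0 : Euc d)) * r x
          + fderiv ℝ φ x ((0:ℝ), w x) + φ x * u x) ∂lam) = 0

/-- The Wasserstein–Fisher–Rao energy `B_δ(ρ,m,μ)`, signed case. -/
def BdeltaSigned (δ : ℝ) (ρ : SignedMeasure (XX d)) (m : VectorMeasure (XX d) (Euc d))
    (μ : SignedMeasure (XX d)) : ℝ≥0∞ :=
  sInf {c : ℝ≥0∞ | ∃ lam : Measure (XX d), IsFiniteMeasure lam ∧
    ∃ (r : XX d → ℝ) (w : XX d → Euc d) (u : XX d → ℝ),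
      Measurable r ∧ Measurable w ∧ Measurable u ∧
      IsDensityS ρ lam r ∧ IsDensityV m lam w ∧ IsDensityS μ lam u ∧
      c = ∫⁻ x, Psi δ (r x) (w x) (u x) ∂lam}

open Classical in
/-- The coercive energy `J_{α,β,δ}(ρ,m,μ)`, signed case. -/
def JSigned (α β δ : ℝ) (ρ : SignedMeasure (XX d)) (m : VectorMeasure (XX d) (Euc d))
    (μ : SignedMeasure (XX d)) : ℝ≥0∞ :=
  if SolvesCESigned ρ m μ then
    ENNReal.ofReal β * BdeltaSigned δ ρ m μ
      + ENNReal.ofReal α * ρ.totalVariation Set.univ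
  else ⊤

/-- A signed measure on `X = ℝ × ℝ^d` is concentrated on `X_Ω = (0,1) × Ω`. -/
def ConcS (Ω : Set (Euc d)) (ρ : SignedMeasure (XX d)) : Prop :=
  ∀ s : Set (XX d), MeasurableSet s → s ⊆ (Ioo (0:ℝ) 1 ×ˢ Ω)ᶜ → ρ s = 0

/-- A vector measure on `X = ℝ × ℝ^d` is concentrated on `X_Ω = (0,1) × Ω`. -/
def ConcV (Ω : Set (Euc d)) (m : VectorMeasure (XX d) (Euc d)) : Prop :=
  ∀ s : Set (XX d), MeasurableSet s → s ⊆ (Ioo (0:ℝ) 1 ×ˢ Ω)ᶜ → m s = 0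

/-- Integral of `φ` against a signed measure. -/
def sInt {α : Type*} [MeasurableSpace α] (σ : SignedMeasure α) (φ : α → ℝ) : ℝ :=
  (∫ x, φ x ∂σ.toJordanDecomposition.posPart) -
    ∫ x, φ x ∂σ.toJordanDecomposition.negPart

/-- Triples `(ρ, m, μ) ∈ M(X_Ω) × M(X_Ω; ℝ^d) × M(X_Ω)`. -/
abbrev Mtriple (d : ℕ) : Type :=
  SignedMeasure (XX d) × VectorMeasure (XX d) (Euc d) × SignedMeasure (XX d)

/-- `P` is the measure `dt ⊗ ρ_t` associated with the curve `η ∈ 𝒮_V`. -/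
def CurveMeasure {V : Set (Euc d)} (η : SCurve V) (P : Measure (XX d)) : Prop :=
  ∀ s : Set (XX d), MeasurableSet s →
    P s = ∫⁻ t in Ioo (0:ℝ) 1, η.toFun t {x | (t, x) ∈ s}

/-- `h'` and `γ'` are the a.e. derivatives of `h` on `(0,1)` and of `γ` on `{h>0}`. -/
def HasAEDerivs (γ : ℝ → Euc d) (h : ℝ → ℝ) (γ' : ℝ → Euc d) (h' : ℝ → ℝ) : Prop :=
  (∀ᵐ t ∂(volume.restrict (Ioo (0:ℝ) 1)), HasDerivAt h (h' t) t) ∧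
  (∀ᵐ t ∂(volume.restrict {t | t ∈ Ioo (0:ℝ) 1 ∧ 0 < h t}), HasDerivAt γ (γ' t) t)

/-- The triple `p = (ρ, m, μ)` is of characteristic form
`ρ = h dt ⊗ δ_γ`, `m = γ' ρ`, `μ = h' dt ⊗ δ_γ` with the regularity of `H_Ω`. -/
def CharRepr (Ω : Set (Euc d)) (γ : ℝ → Euc d) (h : ℝ → ℝ) (γ' : ℝ → Euc d)
    (h' : ℝ → ℝ) (p : Mtriple d) : Prop :=
  (∀ t ∈ Icc (0:ℝ) 1, 0 ≤ h t ∧ γ t ∈ Ω) ∧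
  AC2 h ∧ AC2 (fun t => Real.sqrt (h t)) ∧ AC2 (fun t => Real.sqrt (h t) • γ t) ∧
  (∀ φ : Euc d → ℝ, Continuous φ →
      ContinuousOn (fun t => h t * φ (γ t)) (Icc (0:ℝ) 1)) ∧
  HasAEDerivs γ h γ' h' ∧
  (∀ s : Set (XX d), MeasurableSet s →
      p.1 s = ∫ t in Ioo (0:ℝ) 1, Set.indicator {u : ℝ | (u, γ u) ∈ s} h t) ∧
  (∀ s : Set (XX d), MeasurableSet s →
      p.2.1 s = ∫ t in Ioo (0:ℝ) 1,
        Set.indicator {u : ℝ | (u, γ u) ∈ s} (fun u => h u • γ' u) t) ∧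
  (∀ s : Set (XX d), MeasurableSet s →
      p.2.2 s = ∫ t in Ioo (0:ℝ) 1, Set.indicator {u : ℝ | (u, γ u) ∈ s} h' t)

/-- The set `𝒞` of extremal characteristic triples. -/
def MemC (α β δ : ℝ) (Ω : Set (Euc d)) (p : Mtriple d) : Prop :=
  ∃ (γ : ℝ → Euc d) (h : ℝ → ℝ) (γ' : ℝ → Euc d) (h' : ℝ → ℝ),
    CharRepr Ω γ h γ' h' p ∧
    IsPreconnected {t | t ∈ Icc (0:ℝ) 1 ∧ 0 < h t} ∧
    JSigned α β δ p.1 p.2.1 p.2.2 = 1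


/-- Curves in `C_w([0,1]; M(Ω))`: narrowly continuous curves of signed measures
concentrated on `Ω`, extended to `ℝ` by clamping. -/
def IsCwCurve (Ω : Set (Euc d)) (f : ℝ → SignedMeasure (Euc d)) : Prop :=
  (∀ t, f t = f (clamp t)) ∧
  (∀ t, ∀ s : Set (Euc d), MeasurableSet s → s ⊆ Ωᶜ → f t s = 0) ∧
  (∀ φ : Euc d → ℝ, Continuous φ → Continuous fun t => sInt (f t) φ)

/-- `r` is a density with respect to `lam` of the measure `dt ⊗ f_t` on `X`. -/
def CwDensity (f : ℝ → SignedMeasure (Euc d)) (lam : Measure (XX d))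
    (r : XX d → ℝ) : Prop :=
  ∀ s : Set (XX d), MeasurableSet s →
    (∫ t in Ioo (0:ℝ) 1,
        sInt (f t) ({x : Euc d | (t, x) ∈ s}.indicator fun _ => (1:ℝ)))
      = ∫ x in s, r x ∂lam

/-- `(f, m, μ)` is a measure solution of `∂ₜ ρ + div m = μ`, `f` a curve. -/
def SolvesCECw (f : ℝ → SignedMeasure (Euc d)) (m : VectorMeasure (XX d) (Euc d))
    (μ : SignedMeasure (XX d)) : Prop :=
  ∀ (lam : Measure (XX d)), IsFiniteMeasure lam →
    ∀ (w : XX d → Euc d) (u : XX d → ℝ), Measurable w → Measurable u →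
      IsDensityV m lam w → IsDensityS μ lam u →
      ∀ φ : XX d → ℝ, IsTest φ →
        ((∫ t in Ioo (0:ℝ) 1, sInt (f t) fun x => fderiv ℝ φ (t, x) ((1:ℝ), (0 : Euc d)))
          + (∫ x, fderiv ℝ φ x ((0:ℝ), w x) ∂lam) + ∫ x, φ x * u x ∂lam) = 0

/-- `B_δ(dt ⊗ f_t, m, μ)`. -/
def BdeltaCw (δ : ℝ) (f : ℝ → SignedMeasure (Euc d)) (m : VectorMeasure (XX d) (Euc d))
    (μ : SignedMeasure (XX d)) : ℝ≥0∞ :=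
  sInf {c : ℝ≥0∞ | ∃ lam : Measure (XX d), IsFiniteMeasure lam ∧
    ∃ (r : XX d → ℝ) (w : XX d → Euc d) (u : XX d → ℝ),
      Measurable r ∧ Measurable w ∧ Measurable u ∧
      CwDensity f lam r ∧ IsDensityV m lam w ∧ IsDensityS μ lam u ∧
      c = ∫⁻ x, Psi δ (r x) (w x) (u x) ∂lam}

/-- `‖dt ⊗ f_t‖_{M(X_Ω)}`. -/
def TVCw (f : ℝ → SignedMeasure (Euc d)) : ℝ≥0∞ :=
  ∫⁻ t in Ioo (0:ℝ) 1, (f t).totalVariation Set.univ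

open Classical in
/-- `J_{α,β,δ}(dt ⊗ f_t, m, μ)`. -/
def JCw (α β δ : ℝ) (f : ℝ → SignedMeasure (Euc d)) (m : VectorMeasure (XX d) (Euc d))
    (μ : SignedMeasure (XX d)) : ℝ≥0∞ :=
  if SolvesCECw f m μ then
    ENNReal.ofReal β * BdeltaCw δ f m μ + ENNReal.ofReal α * TVCw f
  else ⊤

/-- The set `𝒞` in curve form: `(f, m, μ)` with `f_t = h(t) δ_{γ(t)}`,
`m = h γ' dt ⊗ δ_γ`, `μ = h' dt ⊗ δ_γ`, with `H_Ω`-regularity, connected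
positivity set and unit energy. -/
def MemCCw (α β δ : ℝ) (Ω : Set (Euc d)) (f : ℝ → SignedMeasure (Euc d))
    (m : VectorMeasure (XX d) (Euc d)) (μ : SignedMeasure (XX d)) : Prop :=
  ∃ (γ : ℝ → Euc d) (h : ℝ → ℝ) (γ' : ℝ → Euc d) (h' : ℝ → ℝ),
    (∀ t ∈ Icc (0:ℝ) 1, 0 ≤ h t ∧ γ t ∈ Ω) ∧
    AC2 h ∧ AC2 (fun t => Real.sqrt (h t)) ∧ AC2 (fun t => Real.sqrt (h t) • γ t) ∧
    (∀ φ : Euc d → ℝ, Continuous φ →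
        ContinuousOn (fun t => h t * φ (γ t)) (Icc (0:ℝ) 1)) ∧
    HasAEDerivs γ h γ' h' ∧
    (∀ t, f t = h (clamp t) • (Measure.dirac (γ (clamp t))).toSignedMeasure) ∧
    (∀ s : Set (XX d), MeasurableSet s →
        m s = ∫ t in Ioo (0:ℝ) 1,
          Set.indicator {u : ℝ | (u, γ u) ∈ s} (fun u => h u • γ' u) t) ∧
    (∀ s : Set (XX d), MeasurableSet s →
        μ s = ∫ t in Ioo (0:ℝ) 1, Set.indicator {u : ℝ | (u, γ u) ∈ s} h' t) ∧
    IsPreconnected {t | t ∈ Icc (0:ℝ) 1 ∧ 0 < h t} ∧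
    JCw α β δ f m μ = 1

/-- The mollified density `ρ_t ∗ ξ_ε + ε χ_V`. -/
def mollDens (V : Set (Euc d)) (ρ : ℝ → Measure (Euc d)) (ξ : Euc d → ℝ) (ε : ℝ)
    (t : ℝ) (x : Euc d) : ℝ :=
  (∫ y, (ε ^ d)⁻¹ * ξ (ε⁻¹ • (x - y)) ∂(ρ t)) + ε * V.indicator (fun _ => (1:ℝ)) x

/-- The mollified measure `ρ_t^ε = (ρ_t ∗ ξ_ε + ε χ_V) dx`. -/
def mollRho (V : Set (Euc d)) (ρ : ℝ → Measure (Euc d)) (ξ : Euc d → ℝ) (ε : ℝ) :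
    ℝ → Measure (Euc d) :=
  fun t => volume.withDensity fun x => ENNReal.ofReal (mollDens V ρ ξ ε t x)

open Classical in
/-- The mollified velocity field `v^ε = ((v ρ_t) ∗ ξ_ε) / ρ_t^ε`. -/
def mollV (V : Set (Euc d)) (ρ : ℝ → Measure (Euc d)) (v : XX d → Euc d)
    (ξ : Euc d → ℝ) (ε : ℝ) : XX d → Euc d :=
  fun p => if mollDens V ρ ξ ε p.1 p.2 = 0 then 0 else
    (mollDens V ρ ξ ε p.1 p.2)⁻¹ •
      ∫ y, ((ε ^ d)⁻¹ * ξ (ε⁻¹ • (p.2 - y))) • v (p.1, y) ∂(ρ p.1)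

open Classical in
/-- The mollified growth field `g^ε = ((g ρ_t) ∗ ξ_ε) / ρ_t^ε`. -/
def mollG (V : Set (Euc d)) (ρ : ℝ → Measure (Euc d)) (g : XX d → ℝ)
    (ξ : Euc d → ℝ) (ε : ℝ) : XX d → ℝ :=
  fun p => if mollDens V ρ ξ ε p.1 p.2 = 0 then 0 else
    (mollDens V ρ ξ ε p.1 p.2)⁻¹ *
      ∫ y, ((ε ^ d)⁻¹ * ξ (ε⁻¹ • (p.2 - y))) * g (p.1, y) ∂(ρ p.1)


lemma rat_near {c t : ℝ} (hc : 0 ≤ c) (ht : t ∈ Icc 0 c) {ε : ℝ} (hε : 0 < ε) :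
    ∃ q : ℚ, (q:ℝ) ∈ Icc 0 c ∧ |(q:ℝ) - t| < ε := by
  obtain ⟨ht0, htc⟩ := ht
  rcases lt_or_eq_of_le htc with h | h
  · obtain ⟨q, hq1, hq2⟩ := exists_rat_btwn (show t < min c (t + ε) by
      simp [lt_min_iff, h, hε])
    rw [lt_min_iff] at hq2
    exact ⟨q, ⟨le_of_lt (lt_of_le_of_lt ht0 hq1), le_of_lt hq2.1⟩,
      by rw [abs_lt]; constructor <;> [linarith [hq1]; linarith [hq2.2]]⟩
  · subst h
    rcases eq_or_lt_of_le hc with h0 | h0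
    · exact ⟨0, by simp [← h0], by simp [← h0, abs_of_nonpos, hε]⟩
    · obtain ⟨q, hq1, hq2⟩ := exists_rat_btwn (show max 0 (t - ε) < t by
        simp [max_lt_iff, h0, hε])
      rw [max_lt_iff] at hq1
      exact ⟨q, ⟨le_of_lt hq1.1, le_of_lt hq2⟩,
        by rw [abs_lt]; constructor <;> [linarith [hq1.2]; linarith [hq2]]⟩

lemma integral_cone_smul (a : ℝ) (ha : 0 ≤ a) (x : Euc d) (φ : Euc d → ℝ) :
    ∫ y, φ y ∂((ENNReal.ofReal a) • Measure.dirac x) = a * φ x := by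
  rw [integral_smul_measure, integral_dirac, ENNReal.toReal_ofReal ha, smul_eq_mul]

def flatSet (μ ν : Measure (Euc d)) : Set ℝ :=
  {r : ℝ | ∃ φ : Euc d → ℝ, Continuous φ ∧ (∀ x, |φ x| ≤ 1) ∧ LipschitzWith 1 φ ∧
        r = (∫ x, φ x ∂μ) - ∫ x, φ x ∂ν}

lemma flatDist_eq (μ ν : Measure (Euc d)) : flatDist μ ν = sSup (flatSet μ ν) := rfl

lemma flatSet_nonempty (μ ν : Measure (Euc d)) : (flatSet μ ν).Nonempty := by
  refine ⟨0, fun _ => 0, continuous_const, fun x => by simp, ?_, by simp⟩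
  simpa using (LipschitzWith.const' (0:ℝ) (K := 1))

lemma flatSet_mem_bound {a b : ℝ} (ha : 0 ≤ a) (hb : 0 ≤ b) (x y : Euc d)
    {r : ℝ} (hr : r ∈ flatSet ((ENNReal.ofReal a) • Measure.dirac x) ((ENNReal.ofReal b) • Measure.dirac y)) :
    r ≤ |a - b| + b * ‖x - y‖ := by
  obtain ⟨φ, hφc, hφ1, hφl, rfl⟩ := hr
  rw [integral_cone_smul a ha, integral_cone_smul b hb]
  have h1 : a * φ x - b * φ y = (a - b) * φ x + b * (φ x - φ y) := by ring
  rw [h1]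
  have h2 : (a - b) * φ x ≤ |a - b| := by
    calc (a - b) * φ x ≤ |(a - b) * φ x| := le_abs_self _
    _ = |a - b| * |φ x| := abs_mul _ _
    _ ≤ |a - b| * 1 := by gcongr; exact hφ1 x
    _ = |a - b| := mul_one _
  have h3 : b * (φ x - φ y) ≤ b * ‖x - y‖ := by
    have := hφl.dist_le_mul x y
    rw [NNReal.coe_one, one_mul] at this
    have h4 : φ x - φ y ≤ ‖x - y‖ := by
      calc φ x - φ y ≤ |φ x - φ y| := le_abs_self _
      _ = dist (φ x) (φ y) := (Real.dist_eq _ _).symm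
      _ ≤ dist x y := this
      _ = ‖x - y‖ := dist_eq_norm _ _
    exact mul_le_mul_of_nonneg_left h4 hb
  linarith

lemma flatSet_bddAbove {a b : ℝ} (ha : 0 ≤ a) (hb : 0 ≤ b) (x y : Euc d) :
    BddAbove (flatSet ((ENNReal.ofReal a) • Measure.dirac x) ((ENNReal.ofReal b) • Measure.dirac y)) :=
  ⟨|a - b| + b * ‖x - y‖, fun _ hr => flatSet_mem_bound ha hb x y hr⟩

lemma flatDist_le_of_cone {a b : ℝ} (ha : 0 ≤ a) (hb : 0 ≤ b) (x y : Euc d) :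
    flatDist ((ENNReal.ofReal a) • Measure.dirac x) ((ENNReal.ofReal b) • Measure.dirac y)
      ≤ |a - b| + b * ‖x - y‖ :=
  csSup_le (flatSet_nonempty _ _) (fun _ hr => flatSet_mem_bound ha hb x y hr)

lemma flatDist_symm (μ ν : Measure (Euc d)) : flatDist μ ν = flatDist ν μ := by
  unfold flatDist
  congr 1
  ext r
  constructor <;> rintro ⟨φ, hc, h1, hl, rfl⟩ <;>
    exact ⟨-φ, hc.neg, fun x => by simpa using h1 x, by simpa using hl.neg, by simp [integral_neg]; ring⟩

-- constant ±1 members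
lemma one_mem_flatSet (μ ν : Measure (Euc d)) :
    ((∫ x, (1:ℝ) ∂μ) - ∫ x, (1:ℝ) ∂ν) ∈ flatSet μ ν := by
  refine ⟨fun _ => 1, continuous_const, fun x => by simp, ?_, rfl⟩
  simpa using (LipschitzWith.const' (1:ℝ) (K := 1))

lemma neg_one_mem_flatSet (μ ν : Measure (Euc d)) :
    ((∫ x, (1:ℝ) ∂ν) - ∫ x, (1:ℝ) ∂μ) ∈ flatSet μ ν := by
  refine ⟨fun _ => -1, continuous_const, fun x => by simp, ?_, ?_⟩
  · simpa using (LipschitzWith.const' (-1:ℝ) (K := 1))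
  · simp [integral_neg]; ring

-- triangle
lemma flatDist_triangle' (μ ν ρ : Measure (Euc d))
    (h1 : BddAbove (flatSet μ ν)) (h2 : BddAbove (flatSet ν ρ))
    (hn1 : (flatSet μ ν).Nonempty) (hn2 : (flatSet ν ρ).Nonempty) :
    sSup (flatSet μ ρ) ≤ sSup (flatSet μ ν) + sSup (flatSet ν ρ) := by
  apply csSup_le
  · exact ⟨0, fun _ => 0, continuous_const, fun x => by simp, by simpa using (LipschitzWith.const' (0:ℝ) (K := 1)), by simp⟩
  rintro r ⟨φ, hc, hb, hl, rfl⟩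
  have e1 : ((∫ x, φ x ∂μ) - ∫ x, φ x ∂ν) ≤ sSup (flatSet μ ν) :=
    le_csSup h1 ⟨φ, hc, hb, hl, rfl⟩
  have e2 : ((∫ x, φ x ∂ν) - ∫ x, φ x ∂ρ) ≤ sSup (flatSet ν ρ) :=
    le_csSup h2 ⟨φ, hc, hb, hl, rfl⟩
  linarith

/-- the mass of `η_t` as a real number -/
def mR {V : Set (Euc d)} (η : SCurve V) (t : ℝ) : ℝ := ∫ x, (1:ℝ) ∂(η.toFun t)

lemma mR_continuous {V : Set (Euc d)} (η : SCurve V) : Continuous (mR η) :=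
  η.narrow (fun _ => 1) continuous_const

lemma curve_repr {V : Set (Euc d)} (η : SCurve V) (t : ℝ) :
    ∃ (a : ℝ) (x : Euc d), 0 ≤ a ∧ x ∈ V ∧ η.toFun t = ENNReal.ofReal a • Measure.dirac x
      ∧ mR η t = a := by
  obtain ⟨a, x, ha, hx, he⟩ := η.cone t
  exact ⟨a, x, ha, hx, he, by rw [mR, he, integral_cone_smul a ha, mul_one]⟩

lemma mR_nonneg {V : Set (Euc d)} (η : SCurve V) (t : ℝ) : 0 ≤ mR η t := by
  obtain ⟨a, x, ha, _, _, hm⟩ := curve_repr η t; rw [hm]; exact ha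

lemma mass_eq_ofReal_mR {V : Set (Euc d)} (η : SCurve V) (t : ℝ) :
    η.toFun t Set.univ = ENNReal.ofReal (mR η t) := by
  obtain ⟨a, x, ha, _, he, hm⟩ := curve_repr η t
  rw [hm, he]
  simp [Measure.smul_apply]

lemma mass_eq_zero_iff {V : Set (Euc d)} (η : SCurve V) (t : ℝ) :
    η.toFun t Set.univ = 0 ↔ mR η t = 0 := by
  rw [mass_eq_ofReal_mR]
  constructor
  · intro h; exact le_antisymm (by simpa using (ENNReal.ofReal_eq_zero.mp h)) (mR_nonneg η t)
  · intro h; simp [h]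

lemma flatSet_mem_masses {a b : ℝ} (ha : 0 ≤ a) (hb : 0 ≤ b) (x y : Euc d)
    {r : ℝ} (hr : r ∈ flatSet ((ENNReal.ofReal a) • Measure.dirac x) ((ENNReal.ofReal b) • Measure.dirac y)) :
    r ≤ a + b := by
  obtain ⟨φ, hφc, hφ1, hφl, rfl⟩ := hr
  rw [integral_cone_smul a ha, integral_cone_smul b hb]
  have h2 : a * φ x ≤ a := by
    calc a * φ x ≤ |a * φ x| := le_abs_self _
    _ = a * |φ x| := by rw [abs_mul, abs_of_nonneg ha]
    _ ≤ a * 1 := by gcongr; exact hφ1 x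
    _ = a := mul_one _
  have h3 : - (b * φ y) ≤ b := by
    calc - (b * φ y) ≤ |b * φ y| := neg_le_abs _
    _ = b * |φ y| := by rw [abs_mul, abs_of_nonneg hb]
    _ ≤ b * 1 := by gcongr; exact hφ1 y
    _ = b := mul_one _
  linarith

lemma zero_mem_flatSet (μ ν : Measure (Euc d)) : (0:ℝ) ∈ flatSet μ ν :=
  ⟨fun _ => 0, continuous_const, fun x => by simp,
    by simpa using (LipschitzWith.const' (0:ℝ) (K := 1)), by simp⟩

lemma flatSet_curve_bddAbove {V : Set (Euc d)} (η₁ η₂ : SCurve V) (t : ℝ) :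
    BddAbove (flatSet (η₁.toFun t) (η₂.toFun t)) := by
  obtain ⟨a, x, ha, _, he₁, _⟩ := curve_repr η₁ t
  obtain ⟨b, y, hb, _, he₂, _⟩ := curve_repr η₂ t
  rw [he₁, he₂]
  exact ⟨a + b, fun r hr => flatSet_mem_masses ha hb x y hr⟩

lemma flatDist_curve_nonneg {V : Set (Euc d)} (η₁ η₂ : SCurve V) (t : ℝ) :
    0 ≤ flatDist (η₁.toFun t) (η₂.toFun t) :=
  le_csSup (flatSet_curve_bddAbove η₁ η₂ t) (zero_mem_flatSet _ _)

lemma flatDist_curve_le_masses {V : Set (Euc d)} (η₁ η₂ : SCurve V) (t : ℝ) :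
    flatDist (η₁.toFun t) (η₂.toFun t) ≤ mR η₁ t + mR η₂ t := by
  obtain ⟨a, x, ha, _, he₁, hm₁⟩ := curve_repr η₁ t
  obtain ⟨b, y, hb, _, he₂, hm₂⟩ := curve_repr η₂ t
  rw [hm₁, hm₂, he₁, he₂]
  exact csSup_le (flatSet_nonempty _ _) (fun r hr => flatSet_mem_masses ha hb x y hr)

def DdSet {V : Set (Euc d)} (η₁ η₂ : SCurve V) : Set ℝ :=
  {r : ℝ | ∃ t ∈ Icc (0:ℝ) 1, r = flatDist (η₁.toFun t) (η₂.toFun t)}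

lemma Ddist_eq_sSup {V : Set (Euc d)} (η₁ η₂ : SCurve V) : Ddist η₁ η₂ = sSup (DdSet η₁ η₂) := rfl

lemma DdSet_nonempty {V : Set (Euc d)} (η₁ η₂ : SCurve V) : (DdSet η₁ η₂).Nonempty :=
  ⟨_, 0, ⟨le_refl 0, zero_le_one⟩, rfl⟩

lemma DdSet_bddAbove {V : Set (Euc d)} (η₁ η₂ : SCurve V) : BddAbove (DdSet η₁ η₂) := by
  obtain ⟨M₁, hM₁⟩ := isCompact_Icc.exists_bound_of_continuousOn (mR_continuous η₁).continuousOn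
  obtain ⟨M₂, hM₂⟩ := isCompact_Icc.exists_bound_of_continuousOn (mR_continuous η₂).continuousOn
  refine ⟨M₁ + M₂, ?_⟩
  rintro r ⟨t, ht, rfl⟩
  calc flatDist (η₁.toFun t) (η₂.toFun t) ≤ mR η₁ t + mR η₂ t := flatDist_curve_le_masses η₁ η₂ t
  _ ≤ M₁ + M₂ := by
      have h1 := hM₁ t ht; have h2 := hM₂ t ht
      rw [Real.norm_eq_abs] at h1 h2
      have := le_abs_self (mR η₁ t); have := le_abs_self (mR η₂ t)
      linarith

lemma flatDist_le_Ddist {V : Set (Euc d)} (η₁ η₂ : SCurve V) {t : ℝ} (ht : t ∈ Icc (0:ℝ) 1) :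
    flatDist (η₁.toFun t) (η₂.toFun t) ≤ Ddist η₁ η₂ :=
  le_csSup (DdSet_bddAbove η₁ η₂) ⟨t, ht, rfl⟩

lemma Ddist_nonneg {V : Set (Euc d)} (η₁ η₂ : SCurve V) : 0 ≤ Ddist η₁ η₂ :=
  le_trans (flatDist_curve_nonneg η₁ η₂ 0) (flatDist_le_Ddist η₁ η₂ ⟨le_refl 0, zero_le_one⟩)

lemma Ddist_symm {V : Set (Euc d)} (η₁ η₂ : SCurve V) : Ddist η₁ η₂ = Ddist η₂ η₁ := by
  unfold Ddist
  congr 1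
  ext r
  constructor <;> rintro ⟨t, ht, rfl⟩ <;> exact ⟨t, ht, flatDist_symm _ _⟩

lemma Ddist_triangle {V : Set (Euc d)} (η₁ η₂ η₃ : SCurve V) :
    Ddist η₁ η₃ ≤ Ddist η₁ η₂ + Ddist η₂ η₃ := by
  rw [Ddist_eq_sSup]
  apply csSup_le (DdSet_nonempty η₁ η₃)
  rintro r ⟨t, ht, rfl⟩
  calc flatDist (η₁.toFun t) (η₃.toFun t)
      ≤ flatDist (η₁.toFun t) (η₂.toFun t) + flatDist (η₂.toFun t) (η₃.toFun t) := by
        rw [flatDist_eq, flatDist_eq, flatDist_eq]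
        exact flatDist_triangle' _ _ _ (flatSet_curve_bddAbove η₁ η₂ t) (flatSet_curve_bddAbove η₂ η₃ t)
          (flatSet_nonempty _ _) (flatSet_nonempty _ _)
    _ ≤ Ddist η₁ η₂ + Ddist η₂ η₃ :=
        add_le_add (flatDist_le_Ddist η₁ η₂ ht) (flatDist_le_Ddist η₂ η₃ ht)

lemma flatDist_self_curve (μ : Measure (Euc d)) : flatDist μ μ = 0 := by
  have : flatSet μ μ = {0} := by
    ext r
    constructor
    · rintro ⟨φ, _, _, _, rfl⟩; simp
    · rintro rfl; exact zero_mem_flatSet μ μ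
  rw [flatDist_eq, this, csSup_singleton]

lemma Ddist_self {V : Set (Euc d)} (η : SCurve V) : Ddist η η = 0 := by
  have : DdSet η η = {0} := by
    ext r
    constructor
    · rintro ⟨t, _, rfl⟩; simp [flatDist_self_curve]
    · rintro rfl; exact ⟨0, ⟨le_refl 0, zero_le_one⟩, (flatDist_self_curve _).symm⟩
  rw [Ddist_eq_sSup, this, csSup_singleton]

lemma abs_mR_sub_le {V : Set (Euc d)} (η₁ η₂ : SCurve V) (t : ℝ) :
    |mR η₁ t - mR η₂ t| ≤ flatDist (η₁.toFun t) (η₂.toFun t) := by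
  rw [abs_le]
  constructor
  · have := le_csSup (flatSet_curve_bddAbove η₁ η₂ t) (neg_one_mem_flatSet (η₁.toFun t) (η₂.toFun t))
    rw [flatDist_eq]; unfold mR; linarith
  · exact le_csSup (flatSet_curve_bddAbove η₁ η₂ t) (one_mem_flatSet _ _)

lemma Ddist_le_iff {V : Set (Euc d)} (η₁ η₂ : SCurve V) (δ : ℝ) :
    Ddist η₁ η₂ ≤ δ ↔ ∀ q : ℚ, (q:ℝ) ∈ Icc (0:ℝ) 1 → flatDist (η₁.toFun q) (η₂.toFun q) ≤ δ := by
  constructor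
  · intro h q hq
    exact le_trans (flatDist_le_Ddist η₁ η₂ hq) h
  · intro h
    rw [Ddist_eq_sSup]
    apply csSup_le (DdSet_nonempty η₁ η₂)
    rintro r ⟨t, ht, rfl⟩
    by_contra hlt
    push_neg at hlt
    obtain ⟨r', hr', hr'δ⟩ := exists_lt_of_lt_csSup (flatSet_nonempty _ _) hlt
    obtain ⟨φ, hφc, hφ1, hφl, rfl⟩ := hr'
    set F : ℝ → ℝ := fun s => (∫ x, φ x ∂(η₁.toFun s)) - ∫ x, φ x ∂(η₂.toFun s) with hF
    have hFc : Continuous F := (η₁.narrow φ hφc).sub (η₂.narrow φ hφc)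
    have hopen : IsOpen {s | δ < F s} := isOpen_lt continuous_const hFc
    obtain ⟨ε, hε, hball⟩ := Metric.isOpen_iff.mp hopen t hr'δ
    obtain ⟨q, hq, hqt⟩ := rat_near zero_le_one ht hε
    have hq' : (q:ℝ) ∈ Metric.ball t ε := by
      rw [Metric.mem_ball, Real.dist_eq]; exact hqt
    have hFq : δ < F q := hball hq'
    have : F q ≤ flatDist (η₁.toFun q) (η₂.toFun q) :=
      le_csSup (flatSet_curve_bddAbove η₁ η₂ q) ⟨φ, hφc, hφ1, hφl, rfl⟩
    exact absurd (lt_of_lt_of_le hFq (le_trans this (h q hq))) (lt_irrefl δ)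

def Sball {V : Set (Euc d)} (η₀ : SCurve V) (ε : ℝ) : Set (SCurve V) := {η | Ddist η₀ η < ε}

lemma isOpen_Sball {V : Set (Euc d)} (η₀ : SCurve V) {ε : ℝ} (hε : 0 < ε) :
    IsOpen[Stop V] (Sball η₀ ε) :=
  TopologicalSpace.GenerateOpen.basic _ ⟨η₀, ε, hε, rfl⟩

lemma mem_Sball_self {V : Set (Euc d)} (η : SCurve V) {ε : ℝ} (hε : 0 < ε) : η ∈ Sball η ε := by
  simp [Sball, Ddist_self, hε]

lemma isOpen_of_forall_Sball {V : Set (Euc d)} {S : Set (SCurve V)}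
    (h : ∀ η ∈ S, ∃ ε, 0 < ε ∧ Sball η ε ⊆ S) : IsOpen[Stop V] S := by
  have hS : S = ⋃₀ {b : Set (SCurve V) | (∃ η₀ ε, 0 < ε ∧ b = Sball η₀ ε) ∧ b ⊆ S} := by
    ext η
    constructor
    · intro hη
      obtain ⟨ε, hε, hsub⟩ := h η hη
      exact ⟨Sball η ε, ⟨⟨η, ε, hε, rfl⟩, hsub⟩, mem_Sball_self η hε⟩
    · rintro ⟨b, ⟨_, hsub⟩, hb⟩
      exact hsub hb
  rw [hS]
  exact TopologicalSpace.GenerateOpen.sUnion _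
    (fun b hb => TopologicalSpace.GenerateOpen.basic _ (by
      obtain ⟨⟨η₀, ε, hε, rfl⟩, _⟩ := hb
      exact ⟨η₀, ε, hε, rfl⟩))

lemma exists_Sball_subset {V : Set (Euc d)} {U : Set (SCurve V)} (hU : IsOpen[Stop V] U) :
    ∀ η ∈ U, ∃ ε, 0 < ε ∧ Sball η ε ⊆ U := by
  induction hU with
  | basic s hs =>
      obtain ⟨η₀, ε₀, hε₀, rfl⟩ := hs
      intro η hη
      refine ⟨ε₀ - Ddist η₀ η, by simpa using hη, ?_⟩
      intro z hz
      have : Ddist η₀ z ≤ Ddist η₀ η + Ddist η z := Ddist_triangle η₀ η z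
      have hz' : Ddist η z < ε₀ - Ddist η₀ η := hz
      show Ddist η₀ z < ε₀
      linarith
  | univ => exact fun η _ => ⟨1, one_pos, fun _ _ => trivial⟩
  | inter s t _ _ ihs iht =>
      rintro η ⟨hs, ht⟩
      obtain ⟨ε₁, hε₁, h₁⟩ := ihs η hs
      obtain ⟨ε₂, hε₂, h₂⟩ := iht η ht
      refine ⟨min ε₁ ε₂, lt_min hε₁ hε₂, fun z hz => ?_⟩
      have hz' : Ddist η z < min ε₁ ε₂ := hz
      exact ⟨h₁ (lt_of_lt_of_le hz' (min_le_left _ _)), h₂ (lt_of_lt_of_le hz' (min_le_right _ _))⟩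
  | sUnion S _ ih =>
      rintro η ⟨s, hs, hη⟩
      obtain ⟨ε, hε, hsub⟩ := ih s hs η hη
      exact ⟨ε, hε, fun z hz => ⟨s, hs, hsub hz⟩⟩

lemma measurableSet_of_isOpenS {V : Set (Euc d)} {U : Set (SCurve V)} (hU : IsOpen[Stop V] U) :
    MeasurableSet U :=
  MeasurableSpace.measurableSet_generateFrom hU

lemma isOpen_mR_lt {V : Set (Euc d)} {q c : ℝ} (hq : q ∈ Icc (0:ℝ) 1) :
    IsOpen[Stop V] {η : SCurve V | mR η q < c} := by
  apply isOpen_of_forall_Sball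
  intro η₀ hη₀
  refine ⟨c - mR η₀ q, by simpa using hη₀, fun η hη => ?_⟩
  have h1 : |mR η₀ q - mR η q| ≤ flatDist (η₀.toFun q) (η.toFun q) := abs_mR_sub_le η₀ η q
  have h2 : flatDist (η₀.toFun q) (η.toFun q) ≤ Ddist η₀ η := flatDist_le_Ddist η₀ η hq
  have h3 : Ddist η₀ η < c - mR η₀ q := hη
  have := abs_le.mp h1
  show mR η q < c
  linarith [this.1]

lemma isOpen_flat_gt {V : Set (Euc d)} (c : SCurve V) {q δ : ℝ} (hq : q ∈ Icc (0:ℝ) 1) :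
    IsOpen[Stop V] {η : SCurve V | δ < flatDist (c.toFun q) (η.toFun q)} := by
  apply isOpen_of_forall_Sball
  intro η₀ hη₀
  refine ⟨flatDist (c.toFun q) (η₀.toFun q) - δ, by simpa using hη₀, fun η hη => ?_⟩
  have htri : flatDist (c.toFun q) (η₀.toFun q)
      ≤ flatDist (c.toFun q) (η.toFun q) + flatDist (η.toFun q) (η₀.toFun q) := by
    rw [flatDist_eq, flatDist_eq, flatDist_eq]
    exact flatDist_triangle' _ _ _ (flatSet_curve_bddAbove c η q) (flatSet_curve_bddAbove η η₀ q)
      (flatSet_nonempty _ _) (flatSet_nonempty _ _)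
  have h2 : flatDist (η.toFun q) (η₀.toFun q) ≤ Ddist η₀ η := by
    rw [flatDist_symm]
    exact flatDist_le_Ddist η₀ η hq
  have h3 : Ddist η₀ η < flatDist (c.toFun q) (η₀.toFun q) - δ := hη
  show δ < flatDist (c.toFun q) (η.toFun q)
  linarith

lemma measurableSet_flat_le {V : Set (Euc d)} (c : SCurve V) {q δ : ℝ} (hq : q ∈ Icc (0:ℝ) 1) :
    MeasurableSet {η : SCurve V | flatDist (c.toFun q) (η.toFun q) ≤ δ} := by
  have : {η : SCurve V | flatDist (c.toFun q) (η.toFun q) ≤ δ}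
      = {η : SCurve V | δ < flatDist (c.toFun q) (η.toFun q)}ᶜ := by
    ext η; simp [not_lt]
  rw [this]
  exact (measurableSet_of_isOpenS (isOpen_flat_gt c hq)).compl

lemma measurableSet_mR_le {V : Set (Euc d)} {q c : ℝ} (hq : q ∈ Icc (0:ℝ) 1) :
    MeasurableSet {η : SCurve V | c ≤ mR η q} := by
  have : {η : SCurve V | c ≤ mR η q} = {η : SCurve V | mR η q < c}ᶜ := by
    ext η; simp [not_lt]
  rw [this]
  exact (measurableSet_of_isOpenS (isOpen_mR_lt hq)).compl

/-- The zero set of the mass. -/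
def Zset {V : Set (Euc d)} (η : SCurve V) : Set ℝ := {t ∈ Icc (0:ℝ) 1 | mR η t = 0}

lemma Zset_closed {V : Set (Euc d)} (η : SCurve V) : IsClosed (Zset η) := by
  have : Zset η = Icc (0:ℝ) 1 ∩ (mR η) ⁻¹' {0} := rfl
  rw [this]
  exact isClosed_Icc.inter (isClosed_singleton.preimage (mR_continuous η))

lemma tauS_set_eq {V : Set (Euc d)} (η : SCurve V) :
    {c : ℝ≥0∞ | ∃ t ∈ Icc (0:ℝ) 1, η.toFun t Set.univ = 0 ∧ c = ENNReal.ofReal t}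
      = (fun t => ENNReal.ofReal t) '' (Zset η) := by
  ext c
  constructor
  · rintro ⟨t, ht, hz, rfl⟩
    exact ⟨t, ⟨ht, (mass_eq_zero_iff η t).mp hz⟩, rfl⟩
  · rintro ⟨t, ⟨ht, hz⟩, rfl⟩
    exact ⟨t, ht, (mass_eq_zero_iff η t).mpr hz, rfl⟩

lemma tauS_eq_top {V : Set (Euc d)} (η : SCurve V) (h : Zset η = ∅) : tauS η = ⊤ := by
  rw [tauS, tauS_set_eq, h]
  simp

lemma tauS_eq_of_nonempty {V : Set (Euc d)} (η : SCurve V) (h : (Zset η).Nonempty) :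
    sInf (Zset η) ∈ Zset η ∧ tauS η = ENNReal.ofReal (sInf (Zset η)) := by
  have hbdd : BddBelow (Zset η) := ⟨0, fun t ht => ht.1.1⟩
  have hmem : sInf (Zset η) ∈ Zset η := (Zset_closed η).csInf_mem h hbdd
  refine ⟨hmem, ?_⟩
  rw [tauS, tauS_set_eq]
  apply le_antisymm
  · exact sInf_le ⟨sInf (Zset η), hmem, rfl⟩
  · apply le_sInf
    rintro c ⟨t, ht, rfl⟩
    exact ENNReal.ofReal_le_ofReal (csInf_le hbdd ht)

lemma lt_tauS_iff {V : Set (Euc d)} (η : SCurve V) {s : ℝ} (hs : s ∈ Icc (0:ℝ) 1) :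
    ENNReal.ofReal s < tauS η ↔ ∀ t ∈ Icc (0:ℝ) s, mR η t ≠ 0 := by
  by_cases hZ : (Zset η).Nonempty
  · obtain ⟨hmem, htau⟩ := tauS_eq_of_nonempty η hZ
    rw [htau, ENNReal.ofReal_lt_ofReal_iff_of_nonneg hs.1]
    constructor
    · intro hlt t ht h0
      have : t ∈ Zset η := ⟨⟨ht.1, le_trans ht.2 hs.2⟩, h0⟩
      have : sInf (Zset η) ≤ t := csInf_le ⟨0, fun u hu => hu.1.1⟩ this
      linarith [ht.2]
    · intro h
      by_contra hle
      push_neg at hle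
      exact h (sInf (Zset η)) ⟨hmem.1.1, hle⟩ hmem.2
  · rw [not_nonempty_iff_eq_empty] at hZ
    rw [tauS_eq_top η hZ]
    simp only [ENNReal.ofReal_lt_top, true_iff]
    intro t ht h0
    have : t ∈ Zset η := ⟨⟨ht.1, le_trans ht.2 hs.2⟩, h0⟩
    rw [hZ] at this
    exact this

lemma pos_on_Icc_iff {V : Set (Euc d)} (η : SCurve V) {c : ℝ} (hc : 0 ≤ c) :
    (∀ t ∈ Icc (0:ℝ) c, mR η t ≠ 0) ↔
      ∃ n : ℕ, ∀ r : ℚ, (r:ℝ) ∈ Icc (0:ℝ) c → 1/(n+1) ≤ mR η r := by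
  constructor
  · intro h
    obtain ⟨x, hx, hmin'⟩ := isCompact_Icc.exists_isMinOn (⟨0, le_refl 0, hc⟩ : (Icc (0:ℝ) c).Nonempty)
      (mR_continuous η).continuousOn
    have hmin : ∀ y ∈ Icc (0:ℝ) c, mR η x ≤ mR η y := fun y hy => hmin' hy
    have hx0 : 0 < mR η x := lt_of_le_of_ne (mR_nonneg η x) (Ne.symm (h x hx))
    obtain ⟨n, hn⟩ := exists_nat_one_div_lt hx0
    exact ⟨n, fun r hr => le_trans (le_of_lt hn) (hmin r hr)⟩
  · rintro ⟨n, hn⟩ t ht h0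
    have hopen : IsOpen {s : ℝ | mR η s < 1/(n+1)} := isOpen_lt (mR_continuous η) continuous_const
    have hmem : t ∈ {s : ℝ | mR η s < 1/(n+1)} := by
      show mR η t < 1/(n+1)
      rw [h0]
      positivity
    obtain ⟨ε, hε, hball⟩ := Metric.isOpen_iff.mp hopen t hmem
    obtain ⟨r, hr, hrt⟩ := rat_near hc ht hε
    have : (r:ℝ) ∈ Metric.ball t ε := by rw [Metric.mem_ball, Real.dist_eq]; exact hrt
    exact absurd (hn r hr) (not_le.mpr (hball this))

lemma measurableSet_lt_tauS {V : Set (Euc d)} (q : ℚ) (hq : (q:ℝ) ∈ Icc (0:ℝ) 1) :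
    MeasurableSet {η : SCurve V | ENNReal.ofReal (q:ℝ) < tauS η} := by
  have heq : {η : SCurve V | ENNReal.ofReal (q:ℝ) < tauS η}
      = ⋃ n : ℕ, ⋂ r : ℚ, ⋂ (_ : (r:ℝ) ∈ Icc (0:ℝ) (q:ℝ)), {η : SCurve V | 1/(n+1) ≤ mR η r} := by
    ext η
    rw [mem_setOf_eq, lt_tauS_iff η hq, pos_on_Icc_iff η hq.1]
    simp [mem_iUnion, mem_iInter]
  rw [heq]
  refine MeasurableSet.iUnion (fun n => MeasurableSet.iInter (fun r => MeasurableSet.iInter (fun hr => ?_)))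
  exact measurableSet_mR_le ⟨hr.1, le_trans hr.2 hq.2⟩

lemma mR_eq_zero_iff_forall {V : Set (Euc d)} (η : SCurve V) (t : ℝ) :
    mR η t = 0 ↔ ∀ n : ℕ, mR η t < 1/(n+1) := by
  constructor
  · intro h n; rw [h]; positivity
  · intro h
    by_contra h0
    have hpos : 0 < mR η t := lt_of_le_of_ne (mR_nonneg η t) (Ne.symm h0)
    obtain ⟨n, hn⟩ := exists_nat_one_div_lt hpos
    exact absurd (h n) (not_lt.mpr (le_of_lt hn))

lemma measurableSet_mR_eq_zero {V : Set (Euc d)} {q : ℝ} (hq : q ∈ Icc (0:ℝ) 1) :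
    MeasurableSet {η : SCurve V | mR η q = 0} := by
  have : {η : SCurve V | mR η q = 0} = ⋂ n : ℕ, {η : SCurve V | mR η q < 1/(n+1)} := by
    ext η
    rw [mem_setOf_eq, mR_eq_zero_iff_forall]
    simp [mem_iInter]
  rw [this]
  exact MeasurableSet.iInter (fun n => measurableSet_of_isOpenS (isOpen_mR_lt hq))

lemma abs_mR_sub_le_Ddist {V : Set (Euc d)} (η₁ η₂ : SCurve V) {t : ℝ} (ht : t ∈ Icc (0:ℝ) 1) :
    |mR η₁ t - mR η₂ t| ≤ Ddist η₁ η₂ :=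
  le_trans (abs_mR_sub_le η₁ η₂ t) (flatDist_le_Ddist η₁ η₂ ht)

lemma eventually_lt_tauS {V : Set (Euc d)} (η : SCurve V) (u : ℕ → SCurve V)
    (hconv : Tendsto (fun n => Ddist (u n) η) atTop (nhds 0))
    {s : ℝ} (hs : s ∈ Icc (0:ℝ) 1) (hpos : ∀ t ∈ Icc (0:ℝ) s, mR η t ≠ 0) :
    ∀ᶠ n in atTop, ENNReal.ofReal s < tauS (u n) := by
  obtain ⟨x, hx, hmin'⟩ := isCompact_Icc.exists_isMinOn
    (⟨0, le_refl 0, hs.1⟩ : (Icc (0:ℝ) s).Nonempty) (mR_continuous η).continuousOn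
  have hm : 0 < mR η x := lt_of_le_of_ne (mR_nonneg η x) (Ne.symm (hpos x hx))
  have hev : ∀ᶠ n in atTop, Ddist (u n) η < mR η x / 2 :=
    hconv.eventually (gt_mem_nhds (by positivity))
  filter_upwards [hev] with n hn
  rw [lt_tauS_iff (u n) hs]
  intro t ht h0
  have ht1 : t ∈ Icc (0:ℝ) 1 := ⟨ht.1, le_trans ht.2 hs.2⟩
  have h1 : |mR (u n) t - mR η t| ≤ Ddist (u n) η := abs_mR_sub_le_Ddist (u n) η ht1
  have h2 := (abs_le.mp h1).1
  have h3 : mR η x ≤ mR η t := hmin' ht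
  rw [h0] at h2
  linarith

lemma tauS_gt_one_eq_top {V : Set (Euc d)} (η : SCurve V)
    (h : ENNReal.ofReal 1 < tauS η) : tauS η = ⊤ := by
  by_cases hZ : (Zset η).Nonempty
  · obtain ⟨hmem, htau⟩ := tauS_eq_of_nonempty η hZ
    rw [htau] at h
    have : sInf (Zset η) ≤ 1 := hmem.1.2
    exact absurd (lt_of_lt_of_le h (ENNReal.ofReal_le_ofReal this)) (lt_irrefl _)
  · rw [not_nonempty_iff_eq_empty] at hZ
    exact tauS_eq_top η hZ

/-- lower semicontinuity of `tauS` -/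
lemma tauS_lsc {V : Set (Euc d)} (η : SCurve V) (u : ℕ → SCurve V)
    (hconv : Tendsto (fun n => Ddist (u n) η) atTop (nhds 0)) :
    tauS η ≤ Filter.liminf (fun n => tauS (u n)) atTop := by
  apply le_of_forall_lt
  intro c hc
  have hc_ne : c ≠ ⊤ := ne_top_of_lt hc
  by_cases hZ : (Zset η).Nonempty
  · obtain ⟨hmem, htau⟩ := tauS_eq_of_nonempty η hZ
    set τ₀ := sInf (Zset η) with hτ₀
    have hτ₀Icc : τ₀ ∈ Icc (0:ℝ) 1 := hmem.1
    rw [htau] at hc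
    have hcR : c.toReal < τ₀ := by
      by_contra hcon
      push_neg at hcon
      have : ENNReal.ofReal τ₀ ≤ ENNReal.ofReal c.toReal := ENNReal.ofReal_le_ofReal hcon
      rw [ENNReal.ofReal_toReal hc_ne] at this
      exact absurd (lt_of_lt_of_le hc this) (lt_irrefl _)
    have hcR0 : 0 ≤ c.toReal := ENNReal.toReal_nonneg
    set s := (c.toReal + τ₀) / 2 with hsdef
    have hs0 : 0 < s := by
      have : 0 < τ₀ := lt_of_le_of_lt hcR0 hcR
      positivity
    have hsτ : s < τ₀ := by rw [hsdef]; linarith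
    have hsIcc : s ∈ Icc (0:ℝ) 1 := ⟨le_of_lt hs0, le_trans (le_of_lt hsτ) hτ₀Icc.2⟩
    have hpos : ∀ t ∈ Icc (0:ℝ) s, mR η t ≠ 0 := by
      rw [← lt_tauS_iff η hsIcc, htau]
      rw [ENNReal.ofReal_lt_ofReal_iff_of_nonneg (le_of_lt hs0)]
      exact hsτ
    have hev := eventually_lt_tauS η u hconv hsIcc hpos
    have hle : ENNReal.ofReal s ≤ Filter.liminf (fun n => tauS (u n)) atTop :=
      Filter.le_liminf_of_le (by isBoundedDefault) (hev.mono (fun n hn => le_of_lt hn))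
    have hcs : c < ENNReal.ofReal s := by
      conv_lhs => rw [← ENNReal.ofReal_toReal hc_ne]
      rw [ENNReal.ofReal_lt_ofReal_iff hs0]
      rw [hsdef]; linarith
    exact lt_of_lt_of_le hcs hle
  · rw [not_nonempty_iff_eq_empty] at hZ
    have hpos : ∀ t ∈ Icc (0:ℝ) 1, mR η t ≠ 0 := by
      intro t ht h0
      have : t ∈ Zset η := ⟨ht, h0⟩
      rw [hZ] at this; exact this
    have hev := eventually_lt_tauS η u hconv (⟨zero_le_one, le_refl 1⟩ : (1:ℝ) ∈ Icc (0:ℝ) 1) hpos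
    have hev' : ∀ᶠ n in atTop, tauS (u n) = ⊤ := hev.mono (fun n hn => tauS_gt_one_eq_top (u n) hn)
    have : Filter.liminf (fun n => tauS (u n)) atTop = ⊤ := by
      have : (⊤:ℝ≥0∞) ≤ Filter.liminf (fun n => tauS (u n)) atTop :=
        Filter.le_liminf_of_le (by isBoundedDefault) (hev'.mono (fun n hn => le_of_eq hn.symm))
      exact le_antisymm le_top this
    rw [this]
    exact lt_of_le_of_ne le_top hc_ne

/-- the cut-off curve belongs to `𝒮*` -/
lemma memSstar_of_cutoff {V : Set (Euc d)} (η ρ : SCurve V)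
    (hρ : ∀ t ∈ Icc (0:ℝ) 1, ρ.toFun t = if ENNReal.ofReal t < tauS η then η.toFun t else 0) :
    ∃ τ : ℝ, {t | t ∈ Icc (0:ℝ) 1 ∧ ρ.toFun t Set.univ ≠ 0} = Icc (0:ℝ) 1 ∩ Iio τ := by
  by_cases hZ : (Zset η).Nonempty
  · obtain ⟨hmem, htau⟩ := tauS_eq_of_nonempty η hZ
    set τ₀ := sInf (Zset η) with hτ₀
    refine ⟨τ₀, ?_⟩
    ext t
    simp only [mem_setOf_eq, mem_inter_iff, mem_Iio]
    constructor
    · rintro ⟨ht, hne⟩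
      refine ⟨ht, ?_⟩
      by_contra hge
      push_neg at hge
      have hcond : ¬ ENNReal.ofReal t < tauS η := by
        rw [htau, ENNReal.ofReal_lt_ofReal_iff_of_nonneg ht.1]
        exact not_lt.mpr hge
      rw [hρ t ht, if_neg hcond] at hne
      simp at hne
    · rintro ⟨ht, hlt⟩
      refine ⟨ht, ?_⟩
      have hcond : ENNReal.ofReal t < tauS η := by
        rw [htau, ENNReal.ofReal_lt_ofReal_iff_of_nonneg ht.1]
        exact hlt
      rw [hρ t ht, if_pos hcond, Ne, mass_eq_zero_iff]
      intro h0
      have : t ∈ Zset η := ⟨ht, h0⟩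
      exact absurd (csInf_le ⟨0, fun u hu => hu.1.1⟩ this) (not_le.mpr hlt)
  · rw [not_nonempty_iff_eq_empty] at hZ
    refine ⟨2, ?_⟩
    ext t
    simp only [mem_setOf_eq, mem_inter_iff, mem_Iio]
    constructor
    · rintro ⟨ht, _⟩
      exact ⟨ht, lt_of_le_of_lt ht.2 one_lt_two⟩
    · rintro ⟨ht, _⟩
      refine ⟨ht, ?_⟩
      have hcond : ENNReal.ofReal t < tauS η := by
        rw [tauS_eq_top η hZ]; exact ENNReal.ofReal_lt_top
      rw [hρ t ht, if_pos hcond, Ne, mass_eq_zero_iff]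
      intro h0
      have : t ∈ Zset η := ⟨ht, h0⟩
      rw [hZ] at this; exact this

lemma exists_zero_iff {V : Set (Euc d)} (η : SCurve V) {c : ℝ} (hc : 0 ≤ c) :
    (∃ s ∈ Icc (0:ℝ) c, mR η s = 0) ↔
      ∀ n : ℕ, ∃ r : ℚ, (r:ℝ) ∈ Icc (0:ℝ) c ∧ mR η r < 1/(n+1) := by
  rw [← not_iff_not]
  push_neg
  exact pos_on_Icc_iff η hc

lemma memSstar_iff_rat {V : Set (Euc d)} (η : SCurve V) :
    (∃ τ : ℝ, {t | t ∈ Icc (0:ℝ) 1 ∧ η.toFun t Set.univ ≠ 0} = Icc (0:ℝ) 1 ∩ Iio τ) ↔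
    ∀ q : ℚ, (q:ℝ) ∈ Icc (0:ℝ) 1 →
      ((∃ s ∈ Icc (0:ℝ) (q:ℝ), mR η s = 0) → mR η q = 0) := by
  have hset : {t | t ∈ Icc (0:ℝ) 1 ∧ η.toFun t Set.univ ≠ 0}
      = {t | t ∈ Icc (0:ℝ) 1 ∧ mR η t ≠ 0} := by
    ext t; rw [mem_setOf_eq, mem_setOf_eq, Ne, Ne, mass_eq_zero_iff]
  rw [hset]
  constructor
  · rintro ⟨τ, hτ⟩ q hq ⟨s, hsq, hs0⟩
    have hs1 : s ∈ Icc (0:ℝ) 1 := ⟨hsq.1, le_trans hsq.2 hq.2⟩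
    have hsnot : s ∉ Icc (0:ℝ) 1 ∩ Iio τ := by
      rw [← hτ]; rw [mem_setOf_eq]; push_neg; intro _; simpa using hs0
    have hτs : τ ≤ s := by
      by_contra hlt; push_neg at hlt; exact hsnot ⟨hs1, hlt⟩
    by_contra hq0
    have : (q:ℝ) ∈ {t | t ∈ Icc (0:ℝ) 1 ∧ mR η t ≠ 0} := ⟨hq, hq0⟩
    rw [hτ] at this
    exact absurd this.2 (not_lt.mpr (le_trans hτs hsq.2))
  · intro hC
    by_cases hZ : (Zset η).Nonempty
    · have hbdd : BddBelow (Zset η) := ⟨0, fun t ht => ht.1.1⟩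
      have hmem : sInf (Zset η) ∈ Zset η := (Zset_closed η).csInf_mem hZ hbdd
      set τ₀ := sInf (Zset η) with hτ₀
      refine ⟨τ₀, ?_⟩
      ext t
      simp only [mem_setOf_eq, mem_inter_iff, mem_Iio]
      constructor
      · rintro ⟨ht, hne⟩
        refine ⟨ht, ?_⟩
        by_contra hge
        push_neg at hge
        -- τ₀ ≤ t, mR t ≠ 0; find rational q ≥ τ₀ near t with mR q > 0
        have htpos : 0 < mR η t := lt_of_le_of_ne (mR_nonneg η t) (Ne.symm hne)
        have hτ₀t : τ₀ < t := by
          rcases lt_or_eq_of_le hge with h | h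
          · exact h
          · exfalso; rw [h] at hmem; exact hne hmem.2
        have hopen : IsOpen {s : ℝ | 0 < mR η s} := isOpen_lt continuous_const (mR_continuous η)
        obtain ⟨ε, hε, hball⟩ := Metric.isOpen_iff.mp hopen t htpos
        set ε' := min ε (t - τ₀) with hε'
        have hε'pos : 0 < ε' := lt_min hε (by linarith)
        obtain ⟨q, hq, hqt⟩ := rat_near zero_le_one ht hε'pos
        have hq_ball : (q:ℝ) ∈ Metric.ball t ε := by
          rw [Metric.mem_ball, Real.dist_eq]
          exact lt_of_lt_of_le hqt (min_le_left _ _)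
        have hqτ₀ : τ₀ ≤ (q:ℝ) := by
          have := abs_lt.mp (lt_of_lt_of_le hqt (min_le_right _ _))
          linarith [this.1]
        have hq0 : mR η q = 0 := hC q hq ⟨τ₀, ⟨hmem.1.1, hqτ₀⟩, hmem.2⟩
        exact absurd (hball hq_ball) (by rw [mem_setOf_eq, hq0]; exact lt_irrefl 0)
      · rintro ⟨ht, hlt⟩
        refine ⟨ht, ?_⟩
        intro h0
        exact absurd (csInf_le hbdd ⟨ht, h0⟩) (not_le.mpr hlt)
    · rw [not_nonempty_iff_eq_empty] at hZ
      refine ⟨2, ?_⟩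
      ext t
      simp only [mem_setOf_eq, mem_inter_iff, mem_Iio]
      constructor
      · rintro ⟨ht, _⟩; exact ⟨ht, lt_of_le_of_lt ht.2 one_lt_two⟩
      · rintro ⟨ht, _⟩
        refine ⟨ht, fun h0 => ?_⟩
        have : t ∈ Zset η := ⟨ht, h0⟩
        rw [hZ] at this; exact this

lemma measurableSet_memSstar {V : Set (Euc d)} :
    MeasurableSet {η : SCurve V |
      ∃ τ : ℝ, {t | t ∈ Icc (0:ℝ) 1 ∧ η.toFun t Set.univ ≠ 0} = Icc (0:ℝ) 1 ∩ Iio τ} := by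
  have heq : {η : SCurve V |
      ∃ τ : ℝ, {t | t ∈ Icc (0:ℝ) 1 ∧ η.toFun t Set.univ ≠ 0} = Icc (0:ℝ) 1 ∩ Iio τ}
      = ⋂ q : ℚ, ⋂ (_ : (q:ℝ) ∈ Icc (0:ℝ) 1),
          ((⋂ n : ℕ, ⋃ r : ℚ, ⋃ (_ : (r:ℝ) ∈ Icc (0:ℝ) (q:ℝ)),
              {η : SCurve V | mR η r < 1/(n+1)})ᶜ ∪ {η : SCurve V | mR η q = 0}) := by
    ext η
    rw [mem_setOf_eq, memSstar_iff_rat]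
    simp only [mem_iInter, mem_union, mem_compl_iff, mem_iUnion, mem_setOf_eq]
    constructor
    · intro h q hq
      by_cases hz : ∃ s ∈ Icc (0:ℝ) (q:ℝ), mR η s = 0
      · exact Or.inr (h q hq hz)
      · left
        rw [exists_zero_iff η hq.1] at hz
        push_neg at hz
        obtain ⟨n, hn⟩ := hz
        intro hall
        obtain ⟨r, hr, hlt⟩ := hall n
        exact absurd hlt (not_lt.mpr (hn r hr))
    · intro h q hq hz
      rcases h q hq with h1 | h1
      · exfalso
        apply h1
        rw [exists_zero_iff η hq.1] at hz
        intro n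
        obtain ⟨r, hr, hlt⟩ := hz n
        exact ⟨r, hr, hlt⟩
      · exact h1
  rw [heq]
  refine MeasurableSet.iInter (fun q => MeasurableSet.iInter (fun hq => MeasurableSet.union ?_ ?_))
  · refine (MeasurableSet.iInter (fun n => MeasurableSet.iUnion (fun r => MeasurableSet.iUnion (fun hr => ?_)))).compl
    exact measurableSet_of_isOpenS (isOpen_mR_lt ⟨hr.1, le_trans hr.2 hq.2⟩)
  · exact measurableSet_mR_eq_zero hq

lemma Ddist_lt_iff_rat {V : Set (Euc d)} (c ρ : SCurve V) (ε : ℝ) :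
    Ddist c ρ < ε ↔ ∃ δ : ℚ, (δ:ℝ) < ε ∧
      ∀ q : ℚ, (q:ℝ) ∈ Icc (0:ℝ) 1 → flatDist (c.toFun q) (ρ.toFun q) ≤ δ := by
  constructor
  · intro h
    obtain ⟨δ, hδ1, hδ2⟩ := exists_rat_btwn h
    exact ⟨δ, hδ2, fun q hq => (Ddist_le_iff c ρ δ).mp (le_of_lt hδ1) q hq⟩
  · rintro ⟨δ, hδ, h⟩
    exact lt_of_le_of_lt ((Ddist_le_iff c ρ δ).mpr h) hδ

lemma measurableSet_Gball {V : Set (Euc d)} (G : SCurve V → SCurve V)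
    (hG : ∀ (η : SCurve V) (t : ℝ), t ∈ Icc (0:ℝ) 1 →
      (G η).toFun t = if ENNReal.ofReal t < tauS η then η.toFun t else 0)
    (c : SCurve V) (ε : ℝ) :
    MeasurableSet {η : SCurve V | Ddist c (G η) < ε} := by
  have heq : {η : SCurve V | Ddist c (G η) < ε} =
      ⋃ δ : ℚ, ⋃ (_ : (δ:ℝ) < ε), ⋂ q : ℚ, ⋂ (_ : (q:ℝ) ∈ Icc (0:ℝ) 1),
        (({η : SCurve V | ENNReal.ofReal (q:ℝ) < tauS η} ∩
            {η : SCurve V | flatDist (c.toFun q) (η.toFun q) ≤ δ}) ∪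
         ({η : SCurve V | ENNReal.ofReal (q:ℝ) < tauS η}ᶜ ∩
            {η : SCurve V | flatDist (c.toFun q) ((0 : Measure (Euc d))) ≤ (δ:ℝ)})) := by
    ext η
    rw [mem_setOf_eq, Ddist_lt_iff_rat]
    simp only [mem_iUnion, mem_iInter, mem_union, mem_inter_iff, mem_compl_iff, mem_setOf_eq]
    constructor
    · rintro ⟨δ, hδ, h⟩
      refine ⟨δ, hδ, fun q hq => ?_⟩
      have hq' := h q hq
      rw [hG η q hq] at hq'
      by_cases hc : ENNReal.ofReal (q:ℝ) < tauS η
      · rw [if_pos hc] at hq'; exact Or.inl ⟨hc, hq'⟩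
      · rw [if_neg hc] at hq'; exact Or.inr ⟨hc, hq'⟩
    · rintro ⟨δ, hδ, h⟩
      refine ⟨δ, hδ, fun q hq => ?_⟩
      rw [hG η q hq]
      rcases h q hq with ⟨hc, hle⟩ | ⟨hc, hle⟩
      · rw [if_pos hc]; exact hle
      · rw [if_neg hc]; exact hle
  rw [heq]
  refine MeasurableSet.iUnion (fun δ => MeasurableSet.iUnion (fun hδ =>
    MeasurableSet.iInter (fun q => MeasurableSet.iInter (fun hq => MeasurableSet.union ?_ ?_))))
  · exact (measurableSet_lt_tauS q hq).inter (measurableSet_flat_le c hq)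
  · exact (measurableSet_lt_tauS q hq).compl.inter (MeasurableSet.const _)

/-- the embedding into `C([0,1], ℝ × ℝ^d)` -/
def eC {V : Set (Euc d)} (η : SCurve V) : C(↥(Icc (0:ℝ) 1), ℝ × (Fin d → ℝ)) :=
  ⟨fun t => (mR η t, fun k => ∫ x, x k ∂(η.toFun (t:ℝ))),
   by
    apply Continuous.prodMk
    · exact (mR_continuous η).comp continuous_subtype_val
    · apply continuous_pi
      intro k
      exact (η.narrow (fun x => x k) (EuclideanSpace.proj k).continuous).comp continuous_subtype_val⟩

lemma flatDist_le_eC {V : Set (Euc d)} {R : ℝ} (hR : ∀ z ∈ V, ‖z‖ ≤ R) (hR0 : 0 ≤ R)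
    (η₁ η₂ : SCurve V) {t : ℝ} (ht : t ∈ Icc (0:ℝ) 1) :
    flatDist (η₁.toFun t) (η₂.toFun t)
      ≤ (1 + Real.sqrt d * (R + 1)) * dist (eC η₁) (eC η₂) := by
  obtain ⟨a, x, ha, hxV, he₁, hm₁⟩ := curve_repr η₁ t
  obtain ⟨b, y, hb, hyV, he₂, hm₂⟩ := curve_repr η₂ t
  set P := dist (eC η₁) (eC η₂) with hP
  have hP0 : 0 ≤ P := dist_nonneg
  have hpt : dist (eC η₁ ⟨t, ht⟩) (eC η₂ ⟨t, ht⟩) ≤ P := ContinuousMap.dist_apply_le_dist _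
  have hab : |a - b| ≤ P := by
    rw [← hm₁, ← hm₂]
    calc |mR η₁ t - mR η₂ t| = dist (mR η₁ t) (mR η₂ t) := (Real.dist_eq _ _).symm
    _ ≤ dist (eC η₁ ⟨t, ht⟩) (eC η₂ ⟨t, ht⟩) := by
        rw [Prod.dist_eq]; exact le_max_left _ _
    _ ≤ P := hpt
  have hB : ∀ k : Fin d, |(∫ z, z k ∂(η₁.toFun t)) - ∫ z, z k ∂(η₂.toFun t)| ≤ P := by
    intro k
    calc |(∫ z, z k ∂(η₁.toFun t)) - ∫ z, z k ∂(η₂.toFun t)|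
        = dist (((eC η₁ ⟨t, ht⟩).2) k) (((eC η₂ ⟨t, ht⟩).2) k) := (Real.dist_eq _ _).symm
      _ ≤ dist ((eC η₁ ⟨t, ht⟩).2) ((eC η₂ ⟨t, ht⟩).2) := dist_le_pi_dist _ _ k
      _ ≤ dist (eC η₁ ⟨t, ht⟩) (eC η₂ ⟨t, ht⟩) := by
          rw [Prod.dist_eq]; exact le_max_right _ _
      _ ≤ P := hpt
  have hcoord : ∀ k : Fin d, |b * (x k - y k)| ≤ R * P + P := by
    intro k
    have hint₁ : (∫ z, z k ∂(η₁.toFun t)) = a * x k := by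
      rw [he₁, integral_cone_smul a ha]
    have hint₂ : (∫ z, z k ∂(η₂.toFun t)) = b * y k := by
      rw [he₂, integral_cone_smul b hb]
    have hx' : |x k| ≤ R := by
      have h1 : ‖x‖ ≤ R := hR x hxV
      calc |x k| ≤ ‖x‖ := by
            rw [EuclideanSpace.norm_eq, ← Real.sqrt_sq_eq_abs]
            apply Real.sqrt_le_sqrt
            have h2 : (fun i => ‖x i‖^2) k ≤ ∑ i, ‖x i‖^2 :=
              Finset.single_le_sum (f := fun i => ‖x i‖^2) (fun i _ => sq_nonneg _) (Finset.mem_univ k)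
            calc x k ^ 2 = ‖x k‖^2 := by rw [Real.norm_eq_abs, sq_abs]
            _ ≤ ∑ i, ‖x i‖^2 := h2
        _ ≤ R := h1
    have key : b * (x k - y k) = (b - a) * x k + ((∫ z, z k ∂(η₁.toFun t)) - ∫ z, z k ∂(η₂.toFun t)) := by
      rw [hint₁, hint₂]; ring
    calc |b * (x k - y k)| ≤ |(b - a) * x k| + |(∫ z, z k ∂(η₁.toFun t)) - ∫ z, z k ∂(η₂.toFun t)| := by
          rw [key]; exact abs_add_le _ _
      _ ≤ R * P + P := by
          have h1 : |(b - a) * x k| ≤ P * R := by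
            rw [abs_mul]
            have : |b - a| = |a - b| := abs_sub_comm _ _
            rw [this]
            exact mul_le_mul hab hx' (abs_nonneg _) hP0
          have h2 := hB k
          nlinarith
  have hnorm : b * ‖x - y‖ ≤ Real.sqrt d * (R * P + P) := by
    have hbv : b * ‖x - y‖ = ‖b • (x - y)‖ := by
      rw [norm_smul, Real.norm_eq_abs, abs_of_nonneg hb]
    rw [hbv, EuclideanSpace.norm_eq]
    have hsum : (∑ k, ‖(b • (x - y)) k‖^2) ≤ (d:ℝ) * (R * P + P)^2 := by
      calc (∑ k, ‖(b • (x - y)) k‖^2) ≤ ∑ _k : Fin d, (R * P + P)^2 := by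
            apply Finset.sum_le_sum
            intro k _
            have heq2 : ‖(b • (x - y)) k‖ = |b * (x k - y k)| := by
              simp only [PiLp.smul_apply, PiLp.sub_apply, smul_eq_mul, Real.norm_eq_abs]
            rw [heq2]
            have h := hcoord k
            nlinarith [abs_nonneg (b * (x k - y k))]
        _ = (d:ℝ) * (R * P + P)^2 := by
            rw [Finset.sum_const, Finset.card_univ, Fintype.card_fin, nsmul_eq_mul]
    calc Real.sqrt (∑ k, ‖(b • (x - y)) k‖^2) ≤ Real.sqrt ((d:ℝ) * (R * P + P)^2) :=
          Real.sqrt_le_sqrt hsum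
      _ = Real.sqrt d * (R * P + P) := by
          rw [Real.sqrt_mul (Nat.cast_nonneg d), Real.sqrt_sq (by positivity)]
  have hflat : flatDist (η₁.toFun t) (η₂.toFun t) ≤ |a - b| + b * ‖x - y‖ := by
    rw [he₁, he₂]
    exact flatDist_le_of_cone ha hb x y
  have hsd : 0 ≤ Real.sqrt d := Real.sqrt_nonneg _
  calc flatDist (η₁.toFun t) (η₂.toFun t) ≤ |a - b| + b * ‖x - y‖ := hflat
    _ ≤ P + Real.sqrt d * (R * P + P) := add_le_add hab hnorm
    _ = (1 + Real.sqrt d * (R + 1)) * P := by ring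

lemma Ddist_le_eC {V : Set (Euc d)} {R : ℝ} (hR : ∀ z ∈ V, ‖z‖ ≤ R) (hR0 : 0 ≤ R)
    (η₁ η₂ : SCurve V) :
    Ddist η₁ η₂ ≤ (1 + Real.sqrt d * (R + 1)) * dist (eC η₁) (eC η₂) := by
  rw [Ddist_eq_sSup]
  apply csSup_le (DdSet_nonempty η₁ η₂)
  rintro r ⟨t, ht, rfl⟩
  exact flatDist_le_eC hR hR0 η₁ η₂ ht

lemma exists_countable_dense_SCurve {V : Set (Euc d)} {R : ℝ}
    (hR : ∀ z ∈ V, ‖z‖ ≤ R) (hR0 : 0 ≤ R) :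
    ∃ T : Set (SCurve V), T.Countable ∧
      ∀ η : SCurve V, ∀ ε : ℝ, 0 < ε → ∃ c ∈ T, Ddist c η < ε := by
  classical
  by_cases hne : Nonempty (SCurve V)
  · obtain ⟨η₀⟩ := hne
    set C := 1 + Real.sqrt d * (R + 1) with hC
    have hCpos : 0 < C := by
      have := Real.sqrt_nonneg (d:ℝ)
      nlinarith
    obtain ⟨Dn, hDc, hDd⟩ := TopologicalSpace.exists_countable_dense
      (C(↥(Icc (0:ℝ) 1), ℝ × (Fin d → ℝ)))
    set pick : C(↥(Icc (0:ℝ) 1), ℝ × (Fin d → ℝ)) → ℕ → SCurve V := fun y n =>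
      if h : ∃ η : SCurve V, dist (eC η) y < 1/(n+1) then h.choose else η₀ with hpick
    refine ⟨(fun p : C(↥(Icc (0:ℝ) 1), ℝ × (Fin d → ℝ)) × ℕ => pick p.1 p.2) '' (Dn ×ˢ univ),
      ((hDc.prod countable_univ).image _), ?_⟩
    intro η ε hε
    obtain ⟨n, hn⟩ := exists_nat_one_div_lt (show (0:ℝ) < ε / (2 * C) by positivity)
    obtain ⟨y, hyD, hy⟩ := hDd.exists_dist_lt (eC η) (show (0:ℝ) < 1/(n+1) by positivity)
    have hex : ∃ η' : SCurve V, dist (eC η') y < 1/(n+1) := ⟨η, hy⟩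
    refine ⟨pick y n, ⟨(y, n), ⟨hyD, mem_univ n⟩, rfl⟩, ?_⟩
    have hpicked : dist (eC (pick y n)) y < 1/(n+1) := by
      rw [hpick]; simp only [dif_pos hex]; exact hex.choose_spec
    have hdist : dist (eC (pick y n)) (eC η) < 2 * (1/(n+1)) := by
      calc dist (eC (pick y n)) (eC η) ≤ dist (eC (pick y n)) y + dist y (eC η) := dist_triangle _ _ _
        _ < 1/(n+1) + 1/(n+1) := by rw [dist_comm y]; exact add_lt_add hpicked hy
        _ = 2 * (1/(n+1)) := by ring
    calc Ddist (pick y n) η ≤ C * dist (eC (pick y n)) (eC η) := Ddist_le_eC hR hR0 _ _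
      _ < C * (2 * (1/(n+1))) := by
          apply mul_lt_mul_of_pos_left hdist hCpos
      _ < ε := by
          have h2 : (1:ℝ)/(n+1) < ε / (2*C) := hn
          calc C * (2 * (1/(n+1))) < C * (2 * (ε / (2*C))) := by
                apply mul_lt_mul_of_pos_left _ hCpos
                apply mul_lt_mul_of_pos_left h2 two_pos
            _ = ε := by field_simp
  · exact ⟨∅, countable_empty, fun η => absurd ⟨η⟩ hne⟩

lemma measurable_G {V : Set (Euc d)} {R : ℝ} (hR : ∀ z ∈ V, ‖z‖ ≤ R) (hR0 : 0 ≤ R)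
    (G : SCurve V → SCurve V)
    (hG : ∀ (η : SCurve V) (t : ℝ), t ∈ Icc (0:ℝ) 1 →
      (G η).toFun t = if ENNReal.ofReal t < tauS η then η.toFun t else 0) :
    Measurable G := by
  obtain ⟨T, hTc, hTd⟩ := exists_countable_dense_SCurve hR hR0
  have hgen : (Sborel V) = MeasurableSpace.generateFrom {U : Set (SCurve V) | IsOpen[Stop V] U} := rfl
  show @Measurable _ _ (Sborel V) (Sborel V) G
  rw [hgen]
  apply measurable_generateFrom
  intro U hU
  have key : G ⁻¹' U = ⋃ c ∈ T, ⋃ q : ℚ,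
      ⋃ (_ : 0 < (q:ℝ) ∧ Sball c (2*(q:ℝ)) ⊆ U), {η : SCurve V | Ddist c (G η) < (q:ℝ)} := by
    ext η
    simp only [mem_preimage, mem_iUnion, mem_setOf_eq]
    constructor
    · intro hη
      obtain ⟨ε, hε, hsub⟩ := exists_Sball_subset hU (G η) hη
      obtain ⟨c, hcT, hc⟩ := hTd (G η) (ε/4) (by positivity)
      obtain ⟨q, hq1, hq2⟩ := exists_rat_btwn hc
      have hq0 : 0 < (q:ℝ) := lt_of_le_of_lt (Ddist_nonneg c (G η)) hq1
      refine ⟨c, hcT, q, ⟨hq0, ?_⟩, hq1⟩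
      intro z hz
      apply hsub
      have hz' : Ddist c z < 2*(q:ℝ) := hz
      have : Ddist (G η) z ≤ Ddist (G η) c + Ddist c z := Ddist_triangle _ _ _
      have hsymm : Ddist (G η) c = Ddist c (G η) := Ddist_symm _ _
      show Ddist (G η) z < ε
      rw [hsymm] at this
      have h4 : Ddist c (G η) < ε/4 := hc
      linarith
    · rintro ⟨c, hcT, q, ⟨hq0, hsub⟩, hη⟩
      apply hsub
      show Ddist c (G η) < 2*(q:ℝ)
      linarith
  rw [key]
  apply MeasurableSet.biUnion hTc
  intro c hc
  refine MeasurableSet.iUnion (fun q => MeasurableSet.iUnion (fun _ => ?_))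
  exact measurableSet_Gball G hG c (q:ℝ)

lemma AC2_cut {F : Type*} [NormedAddCommGroup F] [NormedSpace ℝ F] {f g : ℝ → F} {τ₀ : ℝ}
    (hτ : τ₀ ∈ Icc (0:ℝ) 1) (hf : AC2 f) (hfτ : f τ₀ = 0)
    (hg1 : ∀ t ∈ Icc (0:ℝ) 1, t < τ₀ → g t = f t)
    (hg2 : ∀ t ∈ Icc (0:ℝ) 1, τ₀ ≤ t → g t = 0) : AC2 g := by
  obtain ⟨f', hint, hint2, hrepr⟩ := hf
  have hgle : ∀ t ∈ Icc (0:ℝ) 1, t ≤ τ₀ → g t = f t := by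
    intro t ht hle
    rcases lt_or_eq_of_le hle with h | h
    · exact hg1 t ht h
    · rw [h, hg2 τ₀ hτ (le_refl _), hfτ]
  have hg0 : g 0 = f 0 := hgle 0 ⟨le_refl 0, zero_le_one⟩ hτ.1
  have hIoc : ∀ u : ℝ, u ∈ Icc (0:ℝ) 1 → ∫ s in Ioc (0:ℝ) u, f' s = f u - f 0 := by
    intro u hu
    have h1 := hrepr u hu
    rw [intervalIntegral.integral_of_le hu.1] at h1
    rw [h1]; abel
  refine ⟨(Set.Iic τ₀).indicator f', hint.indicator measurableSet_Iic, ?_, ?_⟩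
  · have : (fun t => ‖(Set.Iic τ₀).indicator f' t‖ ^ 2)
        = (Set.Iic τ₀).indicator (fun t => ‖f' t‖ ^ 2) := by
      funext t
      by_cases h : t ∈ Set.Iic τ₀
      · rw [indicator_of_mem h, indicator_of_mem h]
      · rw [indicator_of_notMem h, indicator_of_notMem h, norm_zero]
        simp
    rw [this]
    exact hint2.indicator measurableSet_Iic
  · intro t ht
    have hmin : min t τ₀ ∈ Icc (0:ℝ) 1 := ⟨le_min ht.1 hτ.1, le_trans (min_le_left _ _) ht.2⟩
    have hseteq : Set.Iic τ₀ ∩ Ioc (0:ℝ) t = Ioc (0:ℝ) (min t τ₀) := by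
      ext s
      simp only [mem_inter_iff, mem_Iic, mem_Ioc, le_min_iff, lt_min_iff]
      constructor
      · rintro ⟨h1, h2, h3⟩; exact ⟨h2, h3, h1⟩
      · rintro ⟨h1, h2, h3⟩; exact ⟨h3, h1, h2⟩
    have hcalc : (∫ s in (0:ℝ)..t, (Set.Iic τ₀).indicator f' s) = f (min t τ₀) - f 0 := by
      rw [intervalIntegral.integral_of_le ht.1]
      rw [integral_indicator measurableSet_Iic, Measure.restrict_restrict measurableSet_Iic,
        hseteq]
      exact hIoc _ hmin
    rw [hcalc, hg0]
    rcases le_or_gt t τ₀ with hle | hlt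
    · rw [min_eq_left hle, hgle t ht hle]; abel
    · rw [min_eq_right (le_of_lt hlt), hfτ, hg2 t ht (le_of_lt hlt)]
      simp

lemma memHvg_cutoff {V : Set (Euc d)} (v : XX d → Euc d) (g : XX d → ℝ) (η ρ : SCurve V)
    (hρ : ∀ t ∈ Icc (0:ℝ) 1, ρ.toFun t = if ENNReal.ofReal t < tauS η then η.toFun t else 0)
    (hη : MemHvg V v g η) : MemHvg V v g ρ := by
  classical
  obtain ⟨γ, h, hrep, hAC, hACs, hACsv, hOγ, hOh⟩ := hη
  by_cases hZ : (Zset η).Nonempty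
  · obtain ⟨hmem, htau⟩ := tauS_eq_of_nonempty η hZ
    set τ₀ := sInf (Zset η) with hτ₀def
    have hτIcc : τ₀ ∈ Icc (0:ℝ) 1 := hmem.1
    have hhτ : h τ₀ = 0 := by
      have h1 := (hrep τ₀ hτIcc).2.2
      have h3 : η.toFun τ₀ Set.univ = 0 := (mass_eq_zero_iff η τ₀).mpr hmem.2
      rw [h1] at h3
      have h4 : ENNReal.ofReal (h τ₀) = 0 := by
        simpa [Measure.smul_apply] using h3
      exact le_antisymm (ENNReal.ofReal_eq_zero.mp h4) (hrep τ₀ hτIcc).1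
    set h2 : ℝ → ℝ := fun t => if t < τ₀ then h t else 0 with hh2def
    have hcond : ∀ t ∈ Icc (0:ℝ) 1, (ENNReal.ofReal t < tauS η ↔ t < τ₀) := fun t ht => by
      rw [htau, ENNReal.ofReal_lt_ofReal_iff_of_nonneg ht.1]
    refine ⟨γ, h2, ?_, ?_, ?_, ?_, ?_, ?_⟩
    · intro t ht
      obtain ⟨hh0, hγ, heq⟩ := hrep t ht
      by_cases hlt : t < τ₀
      · refine ⟨by rw [hh2def]; simp only [if_pos hlt]; exact hh0, hγ, ?_⟩
        rw [hρ t ht, if_pos ((hcond t ht).mpr hlt), heq]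
        congr 1
        rw [hh2def]; simp only [if_pos hlt]
      · refine ⟨by rw [hh2def]; simp only [if_neg hlt]; exact le_refl 0, hγ, ?_⟩
        rw [hρ t ht, if_neg (fun hc => hlt ((hcond t ht).mp hc))]
        have : h2 t = 0 := by rw [hh2def]; simp only [if_neg hlt]
        rw [this, ENNReal.ofReal_zero, zero_smul]
    · exact AC2_cut hτIcc hAC hhτ
        (fun t _ hlt => by rw [hh2def]; simp only [if_pos hlt])
        (fun t _ hge => by rw [hh2def]; simp only [if_neg (not_lt.mpr hge)])
    · exact AC2_cut hτIcc hACs (by rw [hhτ, Real.sqrt_zero])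
        (fun t _ hlt => by rw [hh2def]; simp only [if_pos hlt])
        (fun t _ hge => by rw [hh2def]; simp only [if_neg (not_lt.mpr hge), Real.sqrt_zero])
    · exact AC2_cut hτIcc hACsv (by rw [hhτ, Real.sqrt_zero, zero_smul])
        (fun t _ hlt => by rw [hh2def]; simp only [if_pos hlt])
        (fun t _ hge => by rw [hh2def]; simp only [if_neg (not_lt.mpr hge), Real.sqrt_zero, zero_smul])
    · apply ae_restrict_of_ae_restrict_of_subset _ hOγ
      intro t htm
      obtain ⟨ht1, ht2⟩ := htm
      by_cases hlt : t < τ₀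
      · refine ⟨ht1, ?_⟩
        have : h2 t = h t := by rw [hh2def]; simp only [if_pos hlt]
        rwa [this] at ht2
      · exfalso
        have : h2 t = 0 := by rw [hh2def]; simp only [if_neg hlt]
        rw [this] at ht2
        exact lt_irrefl 0 ht2
    · have hsing : (volume.restrict (Ioo (0:ℝ) 1)) {τ₀} = 0 := by
        rw [Measure.restrict_apply (measurableSet_singleton τ₀)]
        exact measure_mono_null inter_subset_left Real.volume_singleton
      have hne : ∀ᵐ t ∂(volume.restrict (Ioo (0:ℝ) 1)), t ≠ τ₀ := by
        have hseteq : {a : ℝ | ¬ a ≠ τ₀} = {τ₀} := by ext a; simp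
        rw [ae_iff, hseteq]
        exact hsing
      filter_upwards [hOh, hne] with t hdt htne
      by_cases hlt : t < τ₀
      · have hev : h2 =ᶠ[nhds t] h := by
          filter_upwards [Iio_mem_nhds hlt] with s hs
          rw [hh2def]; exact if_pos (mem_Iio.mp hs)
        have hd : HasDerivAt h2 (g (t, γ t) * h t) t := hdt.congr_of_eventuallyEq hev
        have hht : h2 t = h t := by rw [hh2def]; simp only [if_pos hlt]
        rw [hht]
        exact hd
      · have hgt : τ₀ < t := lt_of_le_of_ne (not_lt.mp hlt) (Ne.symm htne)
        have hev : h2 =ᶠ[nhds t] (fun _ => (0:ℝ)) := by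
          filter_upwards [Ioi_mem_nhds hgt] with s hs
          rw [hh2def]; exact if_neg (not_lt.mpr (le_of_lt (mem_Ioi.mp hs)))
        have hd : HasDerivAt h2 0 t := (hasDerivAt_const t (0:ℝ)).congr_of_eventuallyEq hev
        have hht : h2 t = 0 := by rw [hh2def]; simp only [if_neg hlt]
        rw [hht, mul_zero]
        exact hd
  · rw [not_nonempty_iff_eq_empty] at hZ
    have hsame : ∀ t ∈ Icc (0:ℝ) 1, ρ.toFun t = η.toFun t := fun t ht => by
      rw [hρ t ht, if_pos (by rw [tauS_eq_top η hZ]; exact ENNReal.ofReal_lt_top)]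
    exact ⟨γ, h, fun t ht => ⟨(hrep t ht).1, (hrep t ht).2.1,
      by rw [hsame t ht]; exact (hrep t ht).2.2⟩, hAC, hACs, hACsv, hOγ, hOh⟩


/-- **Vanishing time and cut-off operator.**
The vanishing time `τ` is `D`-lower semicontinuous, the cut-off operator
`G(γ,h) = (γ, h χ_{[0,τ)})` is Borel measurable, maps `𝒮_Ω` into `𝒮*_Ω` and
`H_Ω^{v,g}` into itself, and `𝒮*_Ω` is Borel measurable. -/
theorem vanishing_time_cutoff (d : ℕ) (hd : 1 ≤ d) (Ω : Set (Euc d))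
    (hΩ : IsClosureOfBoundedDomain Ω)
    (G : SCurve Ω → SCurve Ω)
    (hG : ∀ (η : SCurve Ω) (t : ℝ), t ∈ Icc (0:ℝ) 1 →
      (G η).toFun t = if ENNReal.ofReal t < tauS η then η.toFun t else 0) :
    (∀ (η : SCurve Ω) (u : ℕ → SCurve Ω),
      Tendsto (fun n => Ddist (u n) η) atTop (nhds 0) →
      tauS η ≤ Filter.liminf (fun n => tauS (u n)) atTop) ∧
    Measurable G ∧
    (∀ η : SCurve Ω, MemSstar (G η)) ∧
    (∀ (v : XX d → Euc d) (g : XX d → ℝ) (η : SCurve Ω),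
      MemHvg Ω v g η → MemHvg Ω v g (G η)) ∧
    MeasurableSet {η : SCurve Ω | MemSstar η} := by
  obtain ⟨U, hUo, hUne, hUconn, hUb, hΩeq⟩ := hΩ
  have hΩb : Bornology.IsBounded Ω := by rw [hΩeq]; exact hUb.closure
  obtain ⟨R, hRb⟩ := isBounded_iff_forall_norm_le.mp hΩb
  have hR : ∀ z ∈ Ω, ‖z‖ ≤ max R 0 := fun z hz => le_trans (hRb z hz) (le_max_left _ _)
  have hR0 : (0:ℝ) ≤ max R 0 := le_max_right _ _
  refine ⟨fun η u hconv => tauS_lsc η u hconv,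
    measurable_G hR hR0 G hG,
    fun η => memSstar_of_cutoff η (G η) (hG η),
    fun v g η hη => memHvg_cutoff v g η (G η) (hG η) hη,
    measurableSet_memSstar⟩


end Paper
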